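/- arXiv:2104.03690 — 5 statements merged into one kernel-verified Lean document; each statement's English description precedes it below -/
import Mathlib

section
/- Let Σ be a finite alphabet and L a timed language over Σ. For all finite subsets S, S', S'' ⊆ ℝ≥0, if L is S-invariant and S'-invariant and fract(S'') = fract(S) ∩ fract(S'), then L is S''-invariant. -/
/-- A timed automorphism: a strictly monotone bijection `ℝ → ℝ`
preserving integer differences, i.e. `f (t + 1) = f t + 1`. -/
def IsTimedAut (f : ℝ → ℝ) : Prop :=
  Function.Bijective f ∧ StrictMono f ∧ ∀ t : ℝ, f (t + 1) = f t + 1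

/-- A timed word over alphabet `Γ`: a finite sequence of letters with
nonnegative, monotonically nondecreasing timestamps. -/
def IsTimedWord {Γ : Type*} (w : List (Γ × ℝ)) : Prop :=
  (∀ p ∈ w, 0 ≤ p.2) ∧ w.Chain' (fun p q => p.2 ≤ q.2)

/-- Pointwise action of a function `f : ℝ → ℝ` on a timed word. -/
def actWord {Γ : Type*} (f : ℝ → ℝ) (w : List (Γ × ℝ)) : List (Γ × ℝ) :=
  w.map (fun p => (p.1, f p.2))

/-- A timed language `L` is `S`-invariant if for every `S`-timed automorphism
`π` and every timed word `w` such that `π(w)` is again a timed word,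
`w ∈ L ↔ π(w) ∈ L`. -/
def SInvariant {Γ : Type*} (S : Set ℝ) (L : Set (List (Γ × ℝ))) : Prop :=
  ∀ f : ℝ → ℝ, IsTimedAut f → (∀ t ∈ S, f t = t) →
    ∀ w : List (Γ × ℝ), IsTimedWord w → IsTimedWord (actWord f w) →
      (w ∈ L ↔ actWord f w ∈ L)

/-!
Let `f` fix `S''` pointwise. As `fract S'' = fract S ∩ fract S'`, `f` fixes every point of
`(S + ℤ) ∩ (S' + ℤ)`, and so does every `F θ = mix id f θ = (1 - θ) • id + θ • f`. Whether
`F θ (w) ∈ L` is locally constant in `θ ∈ [0, 1]`, hence the same at `θ = 0` and `θ = 1`.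

For `θ` close to `θ₀`, no timestamp of `w` passes a point of `(S ∪ S') + ℤ` strictly between times
`θ₀` and `θ`, and points of `S + ℤ` move by less than their distance to the points of `S' + ℤ`
outside `S + ℤ`. Then `F θ ∘ (F θ₀)⁻¹ = u ∘ v` with `v` fixing `S + ℤ` and `u` fixing `S' + ℤ`:
`u` is the piecewise linear timed automorphism that agrees with `F θ ∘ (F θ₀)⁻¹` on `S + ℤ`, is the
identity on `S' + ℤ`, and sends the midpoint of each timestamp's move to its end point. Each
timestamp of the intermediate word `v (F θ₀ (w))` lies between its positions at `θ₀` and at `θ`, so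
this word is again timed, and `S`- and `S'`-invariance give `F θ₀ (w) ∈ L ↔ F θ (w) ∈ L`.
-/

open Function Filter Topology Set

theorem map_add_int_of_map_add_one {q : ℝ → ℝ} (hq : ∀ x, q (x + 1) = q x + 1) (x : ℝ) (k : ℤ) :
    q (x + k) = q x + k := by
  have hper : Periodic (fun x => q x - x) 1 := fun x => by simp only [hq]; ring
  have := hper.int_mul k x
  simp only [mul_one] at this
  linarith

namespace IsTimedAut

variable {f g : ℝ → ℝ}

protected theorem id : IsTimedAut id := ⟨bijective_id, strictMono_id, fun _ => rfl⟩

theorem map_add_int (hf : IsTimedAut f) (x : ℝ) (k : ℤ) : f (x + k) = f x + k :=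
  map_add_int_of_map_add_one hf.2.2 x k

theorem comp (hf : IsTimedAut f) (hg : IsTimedAut g) : IsTimedAut (f ∘ g) :=
  ⟨hf.1.comp hg.1, hf.2.1.comp hg.2.1, fun t => by simp only [comp_apply, hg.2.2, hf.2.2]⟩

protected theorem invFun (hf : IsTimedAut f) : IsTimedAut (invFun f) := by
  have hright : RightInverse (invFun f) f := rightInverse_invFun hf.1.2
  have hmono : StrictMono (invFun f) := fun a b hab => by
    rwa [← hf.2.1.lt_iff_lt, hright a, hright b]
  refine ⟨⟨hright.injective, (leftInverse_invFun hf.1.1).surjective⟩, hmono, fun t => ?_⟩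
  apply hf.1.1
  rw [hright, hf.2.2, hright]

theorem continuous (hf : IsTimedAut f) : Continuous f :=
  (hf.2.1.orderIsoOfSurjective f hf.1.2).toHomeomorph.continuous

theorem of_continuous (hc : Continuous f) (hm : StrictMono f) (h1 : ∀ x, f (x + 1) = f x + 1) :
    IsTimedAut f := by
  refine ⟨⟨hm.injective, fun z => ?_⟩, hm, h1⟩
  set n := ⌊z - f 0⌋
  have hn := map_add_int_of_map_add_one h1 0 n
  have hn1 := map_add_int_of_map_add_one h1 0 (n + 1)
  simp only [zero_add, Int.cast_add, Int.cast_one] at hn hn1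
  have hmem : z ∈ Icc (f n) (f (n + 1)) := by
    rw [hn, hn1]
    constructor <;> linarith [Int.floor_le (z - f 0), Int.lt_floor_add_one (z - f 0)]
  obtain ⟨x, -, hx⟩ := intermediate_value_Icc (by linarith) hc.continuousOn hmem
  exact ⟨x, hx⟩

end IsTimedAut

def mix (g h : ℝ → ℝ) (c x : ℝ) : ℝ := g x + c * (h x - g x)

@[simp] theorem mix_zero (g h : ℝ → ℝ) : mix g h 0 = g := by ext; simp [mix]

@[simp] theorem mix_one (g h : ℝ → ℝ) : mix g h 1 = h := by ext; simp [mix]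

theorem mix_mem_uIcc (g h : ℝ → ℝ) {c : ℝ} (hc : c ∈ Icc (0 : ℝ) 1) (x : ℝ) :
    mix g h c x ∈ uIcc (g x) (h x) := by
  obtain ⟨hc0, hc1⟩ := hc
  rcases le_total (g x) (h x) with hle | hle
  · exact mem_uIcc.2 <| .inl ⟨by unfold mix; nlinarith, by unfold mix; nlinarith⟩
  · exact mem_uIcc.2 <| .inr ⟨by unfold mix; nlinarith, by unfold mix; nlinarith⟩

theorem IsTimedAut.mix {g h : ℝ → ℝ} (hg : IsTimedAut g) (hh : IsTimedAut h) {c : ℝ}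
    (hc : c ∈ Icc (0 : ℝ) 1) : IsTimedAut (mix g h c) := by
  have := hg.continuous
  have := hh.continuous
  refine .of_continuous (by unfold _root_.mix; fun_prop) (fun x y hxy => ?_) fun x => ?_
  · have hgxy := hg.2.1 hxy
    have hhxy := hh.2.1 hxy
    unfold _root_.mix
    rcases le_total (g y - g x) (h y - h x) with hle | hle <;> nlinarith [hc.1, hc.2]
  · simp only [_root_.mix, hg.2.2, hh.2.2]; ring

theorem mix_add_int {g h : ℝ → ℝ} (hg : IsTimedAut g) (hh : IsTimedAut h) (c x : ℝ) (k : ℤ) :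
    mix g h c (x + k) = mix g h c x + k := by
  simp only [mix, hg.map_add_int, hh.map_add_int]
  ring

def intTranslates (P : Set ℝ) : Set ℝ := Int.fract ⁻¹' (Int.fract '' P)

theorem mem_intTranslates {P : Set ℝ} {x : ℝ} :
    x ∈ intTranslates P ↔ ∃ c ∈ P, ∃ k : ℤ, x = c + k := by
  simp only [intTranslates, mem_preimage, mem_image, Int.fract_eq_fract]
  constructor
  · rintro ⟨c, hc, k, hk⟩
    exact ⟨c, hc, -k, by push_cast; linarith⟩
  · rintro ⟨c, hc, k, rfl⟩
    exact ⟨c, hc, -k, by push_cast; ring⟩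

@[simp] theorem add_int_mem_intTranslates_iff {P : Set ℝ} {x : ℝ} (k : ℤ) :
    x + k ∈ intTranslates P ↔ x ∈ intTranslates P := by
  simp [intTranslates, Int.fract_add_intCast]

theorem subset_intTranslates (P : Set ℝ) : P ⊆ intTranslates P := fun x hx => ⟨x, hx, rfl⟩

theorem intTranslates_mono {P Q : Set ℝ} (h : P ⊆ Q) : intTranslates P ⊆ intTranslates Q :=
  preimage_mono (image_mono h)

theorem intTranslates_union (P Q : Set ℝ) :
    intTranslates (P ∪ Q) = intTranslates P ∪ intTranslates Q := by
  simp [intTranslates, image_union, preimage_union]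

theorem IsTimedAut.eq_of_mem_intTranslates {f : ℝ → ℝ} {P : Set ℝ} (hf : IsTimedAut f)
    (hfix : ∀ t ∈ P, f t = t) {c : ℝ} (hc : c ∈ intTranslates P) : f c = c := by
  obtain ⟨t, ht, k, rfl⟩ := mem_intTranslates.1 hc
  rw [hf.map_add_int, hfix t ht]

section Extension

variable (P : Finset ℝ) (hP : P.Nonempty)

/-- The largest point of `P + ℤ` that is `≤ t`. -/
noncomputable def lowerPt (t : ℝ) : ℝ := t - P.inf' hP fun c => Int.fract (t - c)

/-- The smallest point of `P + ℤ` that is `> t`. -/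
noncomputable def upperPt (t : ℝ) : ℝ := t + 1 - P.sup' hP fun c => Int.fract (t - c)

noncomputable def plExtend (q : ℝ → ℝ) (t : ℝ) : ℝ :=
  q (lowerPt P hP t) + (t - lowerPt P hP t) * (q (upperPt P hP t) - q (lowerPt P hP t)) /
    (upperPt P hP t - lowerPt P hP t)

variable {P} {t t' d : ℝ}

theorem lowerPt_mem : lowerPt P hP t ∈ intTranslates P := by
  obtain ⟨c, hc, heq⟩ := P.exists_mem_eq_inf' hP fun c => Int.fract (t - c)
  refine mem_intTranslates.2 ⟨c, hc, ⌊t - c⌋, ?_⟩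
  rw [lowerPt, heq, ← Int.self_sub_floor]
  ring

theorem upperPt_mem : upperPt P hP t ∈ intTranslates P := by
  obtain ⟨c, hc, heq⟩ := P.exists_mem_eq_sup' hP fun c => Int.fract (t - c)
  refine mem_intTranslates.2 ⟨c, hc, ⌊t - c⌋ + 1, ?_⟩
  rw [upperPt, heq, ← Int.self_sub_floor]
  push_cast
  ring

theorem lowerPt_le : lowerPt P hP t ≤ t :=
  sub_le_self _ (Finset.le_inf' hP _ fun _ _ => Int.fract_nonneg _)

theorem lt_upperPt : t < upperPt P hP t := by
  have : (P.sup' hP fun c => Int.fract (t - c)) < 1 :=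
    (Finset.sup'_lt_iff hP).2 fun c _ => Int.fract_lt_one _
  rw [upperPt]
  linarith

theorem le_lowerPt (hd : d ∈ intTranslates P) (hdt : d ≤ t) : d ≤ lowerPt P hP t := by
  obtain ⟨c, hc, k, rfl⟩ := mem_intTranslates.1 hd
  have hfract : Int.fract (t - (c + k)) = Int.fract (t - c) := by
    rw [← sub_sub, Int.fract_sub_intCast]
  have hle : Int.fract (t - (c + k)) ≤ t - (c + k) := by
    rw [← Int.self_sub_floor]
    linarith [Int.cast_nonneg (R := ℝ) (Int.floor_nonneg.2 (sub_nonneg.2 hdt))]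
  have := Finset.inf'_le (fun c => Int.fract (t - c)) hc
  rw [lowerPt]
  linarith

theorem upperPt_le (hd : d ∈ intTranslates P) (htd : t < d) : upperPt P hP t ≤ d := by
  obtain ⟨c, hc, k, rfl⟩ := mem_intTranslates.1 hd
  have hfract : Int.fract (t - (c + k)) = Int.fract (t - c) := by
    rw [← sub_sub, Int.fract_sub_intCast]
  have hfloor : ⌊t - (c + k)⌋ ≤ -1 := by
    have := Int.floor_lt.2 (show t - (c + k) < ((0 : ℤ) : ℝ) by push_cast; linarith)
    omega
  have hle : t - (c + k) + 1 ≤ Int.fract (t - (c + k)) := by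
    rw [← Int.self_sub_floor]
    have : (⌊t - (c + k)⌋ : ℝ) ≤ -1 := by exact_mod_cast hfloor
    linarith
  have := Finset.le_sup' (fun c => Int.fract (t - c)) hc
  rw [upperPt]
  linarith

theorem lowerPt_add_one : lowerPt P hP (t + 1) = lowerPt P hP t + 1 := by
  simp only [lowerPt, add_sub_right_comm t 1, Int.fract_add_one]

theorem upperPt_add_one : upperPt P hP (t + 1) = upperPt P hP t + 1 := by
  simp only [upperPt, add_sub_right_comm t 1, Int.fract_add_one]
  ring

theorem lowerPt_eq_self (hd : d ∈ intTranslates P) : lowerPt P hP d = d :=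
  le_antisymm (lowerPt_le hP) (le_lowerPt hP hd le_rfl)

theorem lowerPt_eq_and_upperPt_eq (htt' : t ≤ t') (ht' : t' < upperPt P hP t) :
    lowerPt P hP t' = lowerPt P hP t ∧ upperPt P hP t' = upperPt P hP t := by
  refine ⟨le_antisymm ?_ (le_lowerPt hP (lowerPt_mem hP) ((lowerPt_le hP).trans htt')), ?_⟩
  · rcases le_or_gt (lowerPt P hP t') t with h | h
    · exact le_lowerPt hP (lowerPt_mem hP) h
    · exact absurd ((upperPt_le hP (lowerPt_mem hP) h).trans (lowerPt_le hP)) (not_le.2 ht')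
  · exact le_antisymm (upperPt_le hP (upperPt_mem hP) ht')
      (upperPt_le hP (upperPt_mem hP) (htt'.trans_lt (lt_upperPt hP)))

variable {q : ℝ → ℝ}

theorem plExtend_add_one (hq : ∀ x, q (x + 1) = q x + 1) :
    plExtend P hP q (t + 1) = plExtend P hP q t + 1 := by
  simp only [plExtend, lowerPt_add_one, upperPt_add_one, hq]
  ring

theorem plExtend_eq (hd : d ∈ intTranslates P) : plExtend P hP q d = q d := by
  simp [plExtend, lowerPt_eq_self hP hd]

theorem exists_le_lt_upperPt (hq : ∀ x, q (x + 1) = q x + 1) (z : ℝ) :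
    ∃ l ∈ intTranslates P, q l ≤ z ∧ z < q (upperPt P hP l) := by
  have hqk := map_add_int_of_map_add_one hq
  -- `c + ⌊z - q c⌋` is the largest point `d` of `c + ℤ` with `q d ≤ z`
  obtain ⟨c₀, hc₀, hl₀⟩ := P.exists_mem_eq_sup' hP fun c => c + (⌊z - q c⌋ : ℝ)
  set l := P.sup' hP fun c => c + (⌊z - q c⌋ : ℝ)
  have hmax : ∀ d ∈ intTranslates P, q d ≤ z → d ≤ l := by
    intro d hd hqd
    obtain ⟨c, hc, k, rfl⟩ := mem_intTranslates.1 hd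
    rw [hqk] at hqd
    have hk : k ≤ ⌊z - q c⌋ := Int.le_floor.2 (by linarith)
    have : c + (k : ℝ) ≤ c + ⌊z - q c⌋ := by gcongr
    exact this.trans (Finset.le_sup' (fun c => c + (⌊z - q c⌋ : ℝ)) hc)
  refine ⟨l, mem_intTranslates.2 ⟨c₀, hc₀, _, hl₀⟩, ?_, ?_⟩
  · rw [hl₀, hqk]
    linarith [Int.floor_le (z - q c₀)]
  · by_contra! h
    exact absurd (hmax _ (upperPt_mem hP) h) (not_le.2 (lt_upperPt hP))

theorem plExtend_surjective (hq : ∀ x, q (x + 1) = q x + 1) : Surjective (plExtend P hP q) := by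
  intro z
  obtain ⟨l, hlmem, hql, hqr⟩ := exists_le_lt_upperPt hP hq z
  obtain ⟨r, hr⟩ : ∃ r, upperPt P hP l = r := ⟨_, rfl⟩
  rw [hr] at hqr
  have hlr : l < r := hr ▸ lt_upperPt hP
  obtain ⟨t, ht⟩ : ∃ t, t = l + (z - q l) * (r - l) / (q r - q l) := ⟨_, rfl⟩
  have hlt : l ≤ t := ht ▸ le_add_of_nonneg_right
    (div_nonneg (mul_nonneg (by linarith) (by linarith)) (by linarith))
  have htr : t < r := by
    have : (z - q l) * (r - l) / (q r - q l) < r - l := by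
      rw [div_lt_iff₀ (by linarith)]
      nlinarith
    linarith
  obtain ⟨hl, hu⟩ := lowerPt_eq_and_upperPt_eq hP hlt (hr ▸ htr)
  rw [lowerPt_eq_self hP hlmem] at hl
  have hrl : r - l ≠ 0 := by linarith
  have hqrl : q r - q l ≠ 0 := by linarith
  refine ⟨t, ?_⟩
  rw [plExtend, hl, hu, hr, ht]
  field_simp
  ring

theorem plExtend_mem_Ico (hmono : StrictMonoOn q (intTranslates P)) :
    plExtend P hP q t ∈ Ico (q (lowerPt P hP t)) (q (upperPt P hP t)) := by
  have hlt := (lowerPt_le hP (t := t)).trans_lt (lt_upperPt hP)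
  have hqlu := hmono (lowerPt_mem hP) (upperPt_mem hP) hlt
  have hl := lowerPt_le hP (t := t)
  have hu := lt_upperPt hP (t := t)
  have hfrac : (t - lowerPt P hP t) / (upperPt P hP t - lowerPt P hP t) ∈ Ico (0 : ℝ) 1 :=
    ⟨div_nonneg (by linarith) (by linarith), (div_lt_one (by linarith)).2 (by linarith)⟩
  rw [plExtend, mul_comm, mul_div_assoc]
  constructor <;> nlinarith [hfrac.1, hfrac.2]

theorem plExtend_strictMono (hmono : StrictMonoOn q (intTranslates P)) :
    StrictMono (plExtend P hP q) := by
  intro t t' htt'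
  rcases le_or_gt (upperPt P hP t) t' with h | h
  · calc plExtend P hP q t < q (upperPt P hP t) := (plExtend_mem_Ico hP hmono).2
      _ ≤ q (lowerPt P hP t') :=
        hmono.monotoneOn (upperPt_mem hP) (lowerPt_mem hP) (le_lowerPt hP (upperPt_mem hP) h)
      _ ≤ plExtend P hP q t' := (plExtend_mem_Ico hP hmono).1
  · obtain ⟨hl, hu⟩ := lowerPt_eq_and_upperPt_eq hP htt'.le h
    have hlt : q (lowerPt P hP t) < q (upperPt P hP t) :=
      hmono (lowerPt_mem hP) (upperPt_mem hP) ((lowerPt_le hP).trans_lt (lt_upperPt hP))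
    have hd : 0 < upperPt P hP t - lowerPt P hP t := by linarith [lowerPt_le hP (t := t)]
    rw [plExtend, plExtend, hl, hu, add_lt_add_iff_left]
    exact div_lt_div_of_pos_right (by nlinarith) hd

end Extension

theorem exists_isTimedAut_eqOn {P : Set ℝ} (hP : P.Finite) {q : ℝ → ℝ}
    (hq : ∀ x, q (x + 1) = q x + 1) (hmono : StrictMonoOn q (intTranslates P)) :
    ∃ u, IsTimedAut u ∧ EqOn u q (intTranslates P) := by
  rcases P.eq_empty_or_nonempty with rfl | hne
  · refine ⟨id, .id, fun x hx => ?_⟩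
    simp [intTranslates] at hx
  · lift P to Finset ℝ using hP
    have hne : P.Nonempty := by exact_mod_cast hne
    exact ⟨plExtend P hne q,
      ⟨⟨(plExtend_strictMono hne hmono).injective, plExtend_surjective hne hq⟩,
        plExtend_strictMono hne hmono, fun t => plExtend_add_one hne hq⟩,
      fun d hd => plExtend_eq hne hd⟩

theorem lt_iff_lt_of_notMem_uIcc {a b y : ℝ} (h : y ∉ uIcc a b) : y < a ↔ y < b := by
  rw [mem_uIcc, not_or, not_and_or, not_and_or, not_le, not_le, not_le, not_le] at h
  constructor <;> intro hy <;> by_contra! hy' <;> rcases h with ⟨h1 | h1, h2 | h2⟩ <;> linarith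

theorem lt_iff_lt_of_notMem_uIcc' {a b y : ℝ} (h : y ∉ uIcc a b) : a < y ↔ b < y := by
  rw [mem_uIcc, not_or, not_and_or, not_and_or, not_le, not_le, not_le, not_le] at h
  constructor <;> intro hy <;> by_contra! hy' <;> rcases h with ⟨h1 | h1, h2 | h2⟩ <;> linarith

theorem eq_or_mem_uIoo_of_mem_uIcc_mid_left {a b y : ℝ} (hy : y ∈ uIcc a (a + 1 / 2 * (b - a))) :
    y = a ∨ y ∈ uIoo a b := by
  rcases eq_or_ne y a with rfl | hya
  · exact .inl rfl
  right
  rcases mem_uIcc.1 hy with ⟨h1, h2⟩ | ⟨h1, h2⟩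
  · have := lt_of_le_of_ne h1 hya.symm
    exact mem_uIoo_of_lt this (by linarith)
  · have := lt_of_le_of_ne h2 hya
    exact mem_uIoo_of_gt (by linarith) this

theorem eq_or_mem_uIoo_of_mem_uIcc_mid_right {a b y : ℝ} (hy : y ∈ uIcc (a + 1 / 2 * (b - a)) b) :
    y = b ∨ y ∈ uIoo a b := by
  rw [show a + 1 / 2 * (b - a) = b + 1 / 2 * (a - b) by ring, uIcc_comm] at hy
  rw [uIoo_comm]
  exact eq_or_mem_uIoo_of_mem_uIcc_mid_left hy

section Step

variable {X Y W : Set ℝ} {g h : ℝ → ℝ}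

def Separated (X Y : Set ℝ) (g h : ℝ → ℝ) : Prop :=
  ∀ x, g x ∈ intTranslates X → ∀ y ∈ uIcc (g x) (h x), y ∈ intTranslates Y → y ∈ intTranslates X

def NoCrossing (P W : Set ℝ) (g h : ℝ → ℝ) : Prop :=
  ∀ t ∈ W, ∀ y ∈ uIoo (g t) (h t), y ∉ intTranslates P

def clearPoints (X Y : Set ℝ) (g h : ℝ → ℝ) : Set ℝ :=
  {x | g x ∉ intTranslates X ∧ h x ∉ intTranslates Y ∧
    ∀ y ∈ uIoo (g x) (h x), y ∉ intTranslates (X ∪ Y)}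

open Classical in
/-- The values of the `Y`-fixing factor `u` in `h ∘ g⁻¹ = u ∘ v`: it must agree with `h ∘ g⁻¹`
on `X + ℤ` (where `v` is the identity), fix `Y + ℤ`, and move the midpoint of each clear move
to its end point. -/
noncomputable def stepTarget (X Y : Set ℝ) (g h : ℝ → ℝ) (d : ℝ) : ℝ :=
  if d ∈ intTranslates X then h (invFun g d)
  else if d ∈ intTranslates Y then d
  else h (invFun (mix g h (1 / 2)) d)

theorem add_int_mem_clearPoints (hg : IsTimedAut g) (hh : IsTimedAut h) {x : ℝ}
    (hx : x ∈ clearPoints X Y g h) (k : ℤ) : x + k ∈ clearPoints X Y g h := by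
  obtain ⟨hgx, hhx, hcross⟩ := hx
  refine ⟨by rwa [hg.map_add_int, add_int_mem_intTranslates_iff],
    by rwa [hh.map_add_int, add_int_mem_intTranslates_iff], fun y hy => ?_⟩
  rw [hg.map_add_int, hh.map_add_int, uIoo, min_add_add_right, max_add_add_right] at hy
  have := hcross (y - k) ⟨by linarith [hy.1], by linarith [hy.2]⟩
  rwa [← add_int_mem_intTranslates_iff k, sub_add_cancel] at this

theorem stepTarget_of_mem_X {d : ℝ} (hd : d ∈ intTranslates X) :
    stepTarget X Y g h d = h (invFun g d) := by
  simp [stepTarget, hd]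

theorem stepTarget_of_mem_Y {d : ℝ} (hdX : d ∉ intTranslates X) (hdY : d ∈ intTranslates Y) :
    stepTarget X Y g h d = d := by
  simp [stepTarget, hdX, hdY]

theorem stepTarget_of_notMem {d : ℝ} (hdX : d ∉ intTranslates X) (hdY : d ∉ intTranslates Y) :
    stepTarget X Y g h d = h (invFun (mix g h (1 / 2)) d) := by
  rw [stepTarget, if_neg hdX, if_neg hdY]

theorem stepTarget_add_one (hg : IsTimedAut g) (hh : IsTimedAut h) (d : ℝ) :
    stepTarget X Y g h (d + 1) = stepTarget X Y g h d + 1 := by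
  have hm := hg.mix hh (c := 1 / 2) ⟨by norm_num, by norm_num⟩
  have h1 : ∀ P : Set ℝ, d + 1 ∈ intTranslates P ↔ d ∈ intTranslates P := fun P => by
    simpa using add_int_mem_intTranslates_iff (P := P) (x := d) 1
  by_cases hX : d ∈ intTranslates X
  · rw [stepTarget_of_mem_X hX, stepTarget_of_mem_X ((h1 X).2 hX), hg.invFun.2.2, hh.2.2]
  by_cases hY : d ∈ intTranslates Y
  · rw [stepTarget_of_mem_Y hX hY, stepTarget_of_mem_Y (mt (h1 X).1 hX) ((h1 Y).2 hY)]
  · rw [stepTarget_of_notMem hX hY, stepTarget_of_notMem (mt (h1 X).1 hX) (mt (h1 Y).1 hY),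
      hm.invFun.2.2, hh.2.2]

theorem notMem_uIcc_mix_left {x y : ℝ} (hx : x ∈ clearPoints X Y g h) (hy : y ∈ intTranslates X) :
    y ∉ uIcc (g x) (mix g h (1 / 2) x) := fun hmem => by
  rcases eq_or_mem_uIoo_of_mem_uIcc_mid_left hmem with rfl | hmem
  · exact hx.1 hy
  · exact hx.2.2 y hmem (intTranslates_union X Y ▸ Or.inl hy)

theorem notMem_uIcc_mix_right {x y : ℝ} (hx : x ∈ clearPoints X Y g h)
    (hy : y ∈ intTranslates Y) : y ∉ uIcc (mix g h (1 / 2) x) (h x) := fun hmem => by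
  rcases eq_or_mem_uIoo_of_mem_uIcc_mid_right hmem with rfl | hmem
  · exact hx.2.1 hy
  · exact hx.2.2 y hmem (intTranslates_union X Y ▸ Or.inr hy)

theorem stepTarget_mix (hg : IsTimedAut g) (hh : IsTimedAut h) {x : ℝ}
    (hx : x ∈ clearPoints X Y g h) : stepTarget X Y g h (mix g h (1 / 2) x) = h x := by
  have hm := hg.mix hh (c := 1 / 2) ⟨by norm_num, by norm_num⟩
  have hX := fun hmem => notMem_uIcc_mix_left hx hmem right_mem_uIcc
  have hY := fun hmem => notMem_uIcc_mix_right hx hmem left_mem_uIcc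
  rw [stepTarget_of_notMem hX hY, leftInverse_invFun hm.1.1 x]

theorem Separated.notMem_uIcc (hsep : Separated X Y g h) (hg : IsTimedAut g) {d d' : ℝ}
    (hd : d ∈ intTranslates X) (hd'Y : d' ∈ intTranslates Y) (hd'X : d' ∉ intTranslates X) :
    d' ∉ uIcc d (h (invFun g d)) := fun hmem => by
  have hgd : g (invFun g d) = d := rightInverse_invFun hg.1.2 d
  exact hd'X (hsep _ (by rwa [hgd]) d' (by rwa [hgd]) hd'Y)

theorem stepTarget_strictMonoOn (hg : IsTimedAut g) (hh : IsTimedAut h)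
    (hsep : Separated X Y g h) :
    StrictMonoOn (stepTarget X Y g h)
      (intTranslates X ∪ intTranslates Y ∪ mix g h (1 / 2) '' clearPoints X Y g h) := by
  have hgi : ∀ d, g (invFun g d) = d := rightInverse_invFun hg.1.2
  have hm := hg.mix hh (c := 1 / 2) ⟨by norm_num, by norm_num⟩
  have kinds : ∀ {d},
      d ∈ intTranslates X ∪ intTranslates Y ∪ mix g h (1 / 2) '' clearPoints X Y g h →
        d ∈ intTranslates X ∨ (d ∉ intTranslates X ∧ d ∈ intTranslates Y) ∨
          ∃ x ∈ clearPoints X Y g h, mix g h (1 / 2) x = d := by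
    rintro d ((hX | hY) | hM)
    · exact .inl hX
    · by_cases hX : d ∈ intTranslates X
      exacts [.inl hX, .inr (.inl ⟨hX, hY⟩)]
    · exact .inr (.inr hM)
  intro d hd d' hd' hlt
  rcases kinds hd with hdX | ⟨hdX, hdY⟩ | ⟨x, hx, rfl⟩ <;>
    rcases kinds hd' with hd'X | ⟨hd'X, hd'Y⟩ | ⟨x', hx', rfl⟩
  · rw [stepTarget_of_mem_X hdX, stepTarget_of_mem_X hd'X]
    exact hh.2.1 (hg.invFun.2.1 hlt)
  · rw [stepTarget_of_mem_X hdX, stepTarget_of_mem_Y hd'X hd'Y]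
    exact (lt_iff_lt_of_notMem_uIcc' (hsep.notMem_uIcc hg hdX hd'Y hd'X)).1 hlt
  · rw [stepTarget_of_mem_X hdX, stepTarget_mix hg hh hx']
    apply hh.2.1
    rw [← hg.2.1.lt_iff_lt, hgi]
    exact (lt_iff_lt_of_notMem_uIcc (notMem_uIcc_mix_left hx' hdX)).2 hlt
  · rw [stepTarget_of_mem_Y hdX hdY, stepTarget_of_mem_X hd'X]
    exact (lt_iff_lt_of_notMem_uIcc (hsep.notMem_uIcc hg hd'X hdY hdX)).1 hlt
  · rwa [stepTarget_of_mem_Y hdX hdY, stepTarget_of_mem_Y hd'X hd'Y]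
  · rw [stepTarget_of_mem_Y hdX hdY, stepTarget_mix hg hh hx']
    exact (lt_iff_lt_of_notMem_uIcc (notMem_uIcc_mix_right hx' hdY)).1 hlt
  · rw [stepTarget_mix hg hh hx, stepTarget_of_mem_X hd'X]
    apply hh.2.1
    rw [← hg.2.1.lt_iff_lt, hgi]
    exact (lt_iff_lt_of_notMem_uIcc' (notMem_uIcc_mix_left hx hd'X)).2 hlt
  · rw [stepTarget_mix hg hh hx, stepTarget_of_mem_Y hd'X hd'Y]
    exact (lt_iff_lt_of_notMem_uIcc' (notMem_uIcc_mix_right hx hd'Y)).1 hlt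
  · rw [stepTarget_mix hg hh hx, stepTarget_mix hg hh hx']
    exact hh.2.1 (hm.2.1.lt_iff_lt.1 hlt)

theorem exists_factorization_of_separated (hX : X.Finite) (hY : Y.Finite) (hW : W.Finite)
    (hg : IsTimedAut g) (hh : IsTimedAut h)
    (hgC : ∀ c ∈ intTranslates X ∩ intTranslates Y, g c = c)
    (hhC : ∀ c ∈ intTranslates X ∩ intTranslates Y, h c = c)
    (hsep : Separated X Y g h) (hcross : NoCrossing (X ∪ Y) W g h) :
    ∃ u v, IsTimedAut u ∧ IsTimedAut v ∧ (∀ y ∈ Y, u y = y) ∧ (∀ x ∈ X, v x = x) ∧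
      (∀ x, u (v (g x)) = h x) ∧ ∀ t ∈ W, v (g t) ∈ uIcc (g t) (h t) := by
  set m := mix g h (1 / 2)
  set D := X ∪ Y ∪ m '' (W ∩ clearPoints X Y g h)
  have hDfin : D.Finite := (hX.union hY).union ((hW.subset inter_subset_left).image m)
  have hD : intTranslates D ⊆ intTranslates X ∪ intTranslates Y ∪ m '' clearPoints X Y g h := by
    rw [intTranslates_union, intTranslates_union]
    refine union_subset_union_right _ fun d hd => ?_
    obtain ⟨_, ⟨x, hx, rfl⟩, k, rfl⟩ := mem_intTranslates.1 hd
    exact ⟨x + k, add_int_mem_clearPoints hg hh hx.2 k, mix_add_int hg hh _ x k⟩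
  obtain ⟨u, hu, huq⟩ := exists_isTimedAut_eqOn hDfin (stepTarget_add_one hg hh)
    ((stepTarget_strictMonoOn hg hh hsep).mono hD)
  have hTD : ∀ {P}, P ⊆ D → ∀ d ∈ intTranslates P, u d = stepTarget X Y g h d :=
    fun hP d hd => huq (intTranslates_mono hP hd)
  have huX : ∀ d ∈ intTranslates X, u d = h (invFun g d) := fun d hd => by
    rw [hTD (subset_union_left.trans subset_union_left) d hd, stepTarget_of_mem_X hd]
  have huY : ∀ d ∈ intTranslates Y, u d = d := fun d hd => by
    rw [hTD (subset_union_right.trans subset_union_left) d hd]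
    by_cases hdX : d ∈ intTranslates X
    · have hgd : invFun g d = d := by
        conv_lhs => rw [← hgC d ⟨hdX, hd⟩]
        exact leftInverse_invFun hg.1.1 d
      rw [stepTarget_of_mem_X hdX, hgd, hhC d ⟨hdX, hd⟩]
    · exact stepTarget_of_mem_Y hdX hd
  have hinv : ∀ {y z}, u y = z → invFun u z = y := fun hyz => by
    rw [← hyz]
    exact leftInverse_invFun hu.1.1 _
  refine ⟨u, invFun u ∘ h ∘ invFun g, hu, hu.invFun.comp (hh.comp hg.invFun),
    fun y hy => huY y (subset_intTranslates Y hy),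
    fun x hx => hinv (huX x (subset_intTranslates X hx)), fun x => ?_, fun t ht => ?_⟩
  · simp [rightInverse_invFun hu.1.2 _, leftInverse_invFun hg.1.1 x]
  simp only [comp_apply, leftInverse_invFun hg.1.1 t]
  by_cases hgt : g t ∈ intTranslates X
  · rw [hinv (by rw [huX _ hgt, leftInverse_invFun hg.1.1])]
    exact left_mem_uIcc
  by_cases hht : h t ∈ intTranslates Y
  · rw [hinv (huY _ hht)]
    exact right_mem_uIcc
  have hx : t ∈ clearPoints X Y g h := ⟨hgt, hht, hcross t ht⟩
  have humt : u (m t) = h t := by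
    rw [hTD subset_union_right (m t) (subset_intTranslates _ ⟨t, ⟨ht, hx⟩, rfl⟩),
      stepTarget_mix hg hh hx]
  rw [hinv humt]
  exact mix_mem_uIcc g h ⟨by norm_num, by norm_num⟩ t

end Step

theorem intTranslates_inter_Icc_finite {P : Set ℝ} (hP : P.Finite) (a b : ℝ) :
    (intTranslates P ∩ Icc a b).Finite := by
  refine (hP.biUnion fun c _ => (finite_Icc ⌈a - c⌉ ⌊b - c⌋).image fun k : ℤ => c + k).subset ?_
  rintro y ⟨hy, hya, hyb⟩
  obtain ⟨c, hc, k, rfl⟩ := mem_intTranslates.1 hy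
  exact mem_biUnion hc ⟨k, ⟨Int.ceil_le.2 (by linarith), Int.le_floor.2 (by linarith)⟩, rfl⟩

theorem eventually_forall_uIcc_mem_intTranslates_eq {P : Set ℝ} (hP : P.Finite) (y₀ : ℝ) :
    ∀ᶠ z in 𝓝 y₀, ∀ y ∈ uIcc y₀ z, y ∈ intTranslates P → y = y₀ := by
  have hfin := (intTranslates_inter_Icc_finite hP (y₀ - 1) (y₀ + 1)).sdiff (t := {y₀})
  have hnhds : _ ∩ Icc (y₀ - 1) (y₀ + 1) ∈ 𝓝 y₀ :=
    inter_mem (hfin.isClosed.compl_mem_nhds (by simp)) (Icc_mem_nhds (by linarith) (by linarith))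
  obtain ⟨ε, hε, hball⟩ := Metric.mem_nhds_iff.1 hnhds
  have hconn : (Metric.ball y₀ ε).OrdConnected := by
    rw [Real.ball_eq_Ioo]
    exact ordConnected_Ioo
  filter_upwards [Metric.ball_mem_nhds y₀ hε] with z hz y hy hyP
  obtain ⟨hnot, hIcc⟩ := hball (hconn.uIcc_subset (Metric.mem_ball_self hε) hz hy)
  by_contra hne
  exact hnot ⟨⟨hyP, hIcc⟩, hne⟩

section Homotopy

variable {f : ℝ → ℝ} {X Y : Set ℝ}

theorem continuous_mix_apply (f : ℝ → ℝ) (x : ℝ) : Continuous fun θ => mix id f θ x := by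
  unfold mix
  fun_prop

theorem eventually_noCrossing {P W : Set ℝ} (hP : P.Finite) (hW : W.Finite) (f : ℝ → ℝ)
    (θ₀ : ℝ) : ∀ᶠ θ in 𝓝 θ₀, NoCrossing P W (mix id f θ₀) (mix id f θ) := by
  refine (eventually_all_finite hW).2 fun t _ => ?_
  filter_upwards [(continuous_mix_apply f t).tendsto θ₀ |>.eventually
    (eventually_forall_uIcc_mem_intTranslates_eq hP _)] with θ hθ y hy hyP
  exact left_notMem_uIoo (hθ y (uIoo_subset_uIcc_self hy) hyP ▸ hy)

theorem eventually_separated (hX : X.Finite) (hY : Y.Finite) (hf : IsTimedAut f) {θ₀ : ℝ}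
    (hθ₀ : θ₀ ∈ Icc (0 : ℝ) 1) : ∀ᶠ θ in 𝓝 θ₀, Separated X Y (mix id f θ₀) (mix id f θ) := by
  have hF₀ := IsTimedAut.id.mix hf hθ₀
  have hev : ∀ᶠ θ in 𝓝 θ₀, ∀ a ∈ X, ∀ y ∈ uIcc a (mix id f θ (invFun (mix id f θ₀) a)),
      y ∈ intTranslates Y → y = a := by
    refine (eventually_all_finite hX).2 fun a _ => ?_
    have h := (continuous_mix_apply f (invFun (mix id f θ₀) a)).tendsto θ₀
    rw [rightInverse_invFun hF₀.1.2 a] at h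
    exact h.eventually (eventually_forall_uIcc_mem_intTranslates_eq hY a)
  filter_upwards [hev] with θ hθ x hx y hy hyY
  obtain ⟨a, ha, k, hak⟩ := mem_intTranslates.1 hx
  have hxk : x = invFun (mix id f θ₀) a + k :=
    hF₀.1.1 (by rw [hF₀.map_add_int, rightInverse_invFun hF₀.1.2, hak])
  rw [hak, hxk, mix_add_int IsTimedAut.id hf] at hy
  have hyk : y - k ∈ uIcc a (mix id f θ (invFun (mix id f θ₀) a)) := by
    rw [mem_uIcc] at hy ⊢
    rcases hy with ⟨h1, h2⟩ | ⟨h1, h2⟩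
    exacts [.inl ⟨by linarith, by linarith⟩, .inr ⟨by linarith, by linarith⟩]
  have := hθ a ha (y - k) hyk ((add_int_mem_intTranslates_iff k).1 (by rwa [sub_add_cancel]))
  rw [show y = a + k by linarith, ← hak]
  exact hx

end Homotopy

section Words

variable {Γ : Type*} {w : List (Γ × ℝ)} {g h : ℝ → ℝ}

theorem actWord_actWord : actWord g (actWord h w) = actWord (g ∘ h) w := by
  simp [actWord, comp_def]

theorem actWord_id : actWord id w = w := by
  simp [actWord]

theorem IsTimedWord.actWord (hw : IsTimedWord w) (hg : Monotone g) (h0 : ∀ p ∈ w, 0 ≤ g p.2) :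
    IsTimedWord (actWord g w) := by
  refine ⟨?_, ?_⟩
  · simp only [_root_.actWord, List.mem_map]
    rintro _ ⟨p, hp, rfl⟩
    exact h0 p hp
  · exact List.isChain_map_of_isChain (S := fun p q : Γ × ℝ => p.2 ≤ q.2) _
      (fun _ _ h => hg h) hw.2

theorem IsTimedWord.nonneg_of_actWord (hw : IsTimedWord (_root_.actWord g w)) {p : Γ × ℝ}
    (hp : p ∈ w) : 0 ≤ g p.2 :=
  hw.1 _ (List.mem_map_of_mem hp)

end Words

theorem actWord_mem_iff_of_separated {Γ : Type*} {L : Set (List (Γ × ℝ))} {X Y : Set ℝ}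
    (hX : X.Finite) (hY : Y.Finite) (hXL : SInvariant X L) (hYL : SInvariant Y L)
    {g h : ℝ → ℝ} (hg : IsTimedAut g) (hh : IsTimedAut h)
    (hgC : ∀ c ∈ intTranslates X ∩ intTranslates Y, g c = c)
    (hhC : ∀ c ∈ intTranslates X ∩ intTranslates Y, h c = c)
    {w : List (Γ × ℝ)} (hw : IsTimedWord w) (hgw : IsTimedWord (actWord g w))
    (hhw : IsTimedWord (actWord h w)) (hsep : Separated X Y g h)
    (hcross : NoCrossing (X ∪ Y) (Prod.snd '' {p | p ∈ w}) g h) :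
    actWord g w ∈ L ↔ actWord h w ∈ L := by
  obtain ⟨u, v, hu, hv, huY, hvX, huvg, hvg⟩ :=
    exists_factorization_of_separated hX hY (w.finite_toSet.image _) hg hh hgC hhC hsep hcross
  have hvgw : IsTimedWord (actWord (v ∘ g) w) :=
    hw.actWord (hv.2.1.monotone.comp hg.2.1.monotone) fun p hp =>
      (le_inf (hgw.nonneg_of_actWord hp) (hhw.nonneg_of_actWord hp)).trans
        (hvg p.2 ⟨p, hp, rfl⟩).1
  have huvg' : u ∘ v ∘ g = h := funext huvg
  calc actWord g w ∈ L ↔ actWord (v ∘ g) w ∈ L := by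
        rw [← actWord_actWord]
        exact hXL v hv hvX _ hgw (by rwa [actWord_actWord])
    _ ↔ actWord h w ∈ L := by
        rw [← huvg', ← actWord_actWord (g := u) (h := v ∘ g)]
        exact hYL u hu huY _ hvgw (by rwa [actWord_actWord, huvg'])

theorem sInvariant_of_fract_inter_general {Γ : Type*}
    (L : Set (List (Γ × ℝ)))
    (S S' S'' : Set ℝ)
    (hSfin : S.Finite) (hS'fin : S'.Finite)
    (hS : SInvariant S L) (hS' : SInvariant S' L)
    (hfr : Int.fract '' S'' = Int.fract '' S ∩ Int.fract '' S') :
    SInvariant S'' L := by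
  intro f hf hfix w hw hfw
  have hC : intTranslates S ∩ intTranslates S' = intTranslates S'' := by
    rw [intTranslates, intTranslates, intTranslates, hfr, preimage_inter]
  have hF : ∀ θ ∈ Icc (0 : ℝ) 1, IsTimedAut (mix id f θ) := fun θ hθ => IsTimedAut.id.mix hf hθ
  have hFC : ∀ θ, ∀ c ∈ intTranslates S ∩ intTranslates S', mix id f θ c = c := fun θ c hc => by
    simp [mix, hf.eq_of_mem_intTranslates hfix (hC ▸ hc)]
  have hFw : ∀ θ ∈ Icc (0 : ℝ) 1, IsTimedWord (actWord (mix id f θ) w) := fun θ hθ =>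
    hw.actWord (hF θ hθ).2.1.monotone fun p hp =>
      (le_inf (hw.1 p hp) (hfw.nonneg_of_actWord hp)).trans (mix_mem_uIcc id f hθ p.2).1
  have key := isPreconnected_Icc.induction₂
    (fun θ θ' => actWord (mix id f θ) w ∈ L ↔ actWord (mix id f θ') w ∈ L)
    (fun θ₀ hθ₀ => ?_) (fun _ _ _ _ _ _ => Iff.trans) (fun _ _ _ _ => Iff.symm)
    (left_mem_Icc.2 zero_le_one) (right_mem_Icc.2 zero_le_one)
  · simpa [actWord_id] using key
  filter_upwards [nhdsWithin_le_nhds (eventually_separated hSfin hS'fin hf hθ₀),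
    nhdsWithin_le_nhds (eventually_noCrossing (hSfin.union hS'fin) (w.finite_toSet.image _) f θ₀),
    self_mem_nhdsWithin] with θ hsep hcross hθ
  exact actWord_mem_iff_of_separated hSfin hS'fin hS hS' (hF θ₀ hθ₀) (hF θ hθ) (hFC θ₀) (hFC θ)
    hw (hFw θ₀ hθ₀) (hFw θ hθ) hsep hcross

/-- if a timed language `L` is both `S`-invariant and
`S'`-invariant, and `fract S'' = fract S ∩ fract S'`, then `L` is
`S''`-invariant. -/
theorem sInvariant_of_fract_inter {Γ : Type*} [Fintype Γ]
    (L : Set (List (Γ × ℝ))) (hL : ∀ w ∈ L, IsTimedWord w)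
    (S S' S'' : Set ℝ)
    (hSfin : S.Finite) (hS'fin : S'.Finite) (hS''fin : S''.Finite)
    (hSpos : ∀ t ∈ S, 0 ≤ t) (hS'pos : ∀ t ∈ S', 0 ≤ t) (hS''pos : ∀ t ∈ S'', 0 ≤ t)
    (hS : SInvariant S L) (hS' : SInvariant S' L)
    (hfr : Int.fract '' S'' = Int.fract '' S ∩ Int.fract '' S') :
    SInvariant S'' L :=
  sInvariant_of_fract_inter_general L S S' S'' hSfin hS'fin hS hS' hfr
end

section
/- Let F, F' ⊆ [0,1) be finite sets. Every (F ∩ F')-timed automorphism π decomposes into π = πₙ ∘ ⋯ ∘ π₁, where each πᵢ is either an F-timed automorphism or an F'-timed automorphism. Equivalently, Π_{F ∩ F'} is contained in the subgroup of the group Π of timed automorphisms generated by Π_F ∪ Π_{F'}. -/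
/-! A timed automorphism fixing `S` fixes `S + ℤ` pointwise, and any point `y ∉ S + ℤ` can be
moved anywhere nearby by one: add to the identity a small multiple of a periodic tent function
centred at `y + ℤ`. For finite `A, B ⊆ [0, 1)` with `A ∩ B = S`, every point off `S + ℤ` lies off
`A + ℤ` or off `B + ℤ`, so the orbits of `Π_A ⊔ Π_B` are open on each interval avoiding `S + ℤ`,
and by connectedness such an interval lies in a single orbit. (Below, `y ∉ S + ℤ` is written as
`(y : UnitAddCircle) ∉ (↑) '' S`.)

Induct on `|F \ F'|`. Pick `x ∈ F \ F'` and `π ∈ Π_{F ∩ F'}`; no point of `(F ∩ F') + ℤ` lies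
between `π⁻¹ x` and `x`, so with `A = insert x (F ∩ F')` and `B = F'` some `g ∈ Π_A ⊔ Π_{F'}`
sends `x` to `π⁻¹ x`. Then `π g` fixes `A = F ∩ insert x F'`, and the induction hypothesis for
`F, insert x F'` puts both `π g` and `g` into `Π_F ⊔ Π_{F'}`.
-/

/-- A permutation of `ℝ` is a timed automorphism if it is strictly monotone
and preserves integer differences: `π (t + 1) = π t + 1`. -/
def IsTimedAutPerm (π : Equiv.Perm ℝ) : Prop :=
  StrictMono π ∧ ∀ t : ℝ, π (t + 1) = π t + 1

/-- `Π_S`: the set of `S`-timed automorphisms (as permutations of `ℝ`). -/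
def TimedAutFixing (S : Set ℝ) : Set (Equiv.Perm ℝ) :=
  {π | IsTimedAutPerm π ∧ ∀ t ∈ S, π t = t}

open Set Filter Topology MulAction

theorem map_add_intCast_of_map_add_one {f : ℝ → ℝ} (h : ∀ t, f (t + 1) = f t + 1)
    (t : ℝ) (n : ℤ) : f (t + n) = f t + n := by
  have hper : Function.Periodic (fun t => f t - t) 1 := fun t => by simp only [h]; ring
  have := hper.int_mul n t
  simp only [mul_one] at this
  linarith

namespace IsTimedAutPerm

theorem one : IsTimedAutPerm 1 :=
  ⟨strictMono_id, fun _ => rfl⟩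

theorem mul {π σ : Equiv.Perm ℝ} (hπ : IsTimedAutPerm π) (hσ : IsTimedAutPerm σ) :
    IsTimedAutPerm (π * σ) :=
  ⟨hπ.1.comp hσ.1, fun t => by simp only [Equiv.Perm.mul_apply, hσ.2, hπ.2]⟩

theorem inv {π : Equiv.Perm ℝ} (hπ : IsTimedAutPerm π) : IsTimedAutPerm π⁻¹ := by
  refine ⟨fun s t hst => ?_, fun t => hπ.1.injective ?_⟩
  · rwa [← hπ.1.lt_iff_lt, Equiv.Perm.coe_inv, π.apply_symm_apply, π.apply_symm_apply]
  · rw [hπ.2, Equiv.Perm.coe_inv, π.apply_symm_apply, π.apply_symm_apply]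

theorem map_add_intCast {π : Equiv.Perm ℝ} (hπ : IsTimedAutPerm π) (t : ℝ) (n : ℤ) :
    π (t + n) = π t + n :=
  map_add_intCast_of_map_add_one hπ.2 t n

end IsTimedAutPerm

def timedAutFixingSubgroup (S : Set ℝ) : Subgroup (Equiv.Perm ℝ) where
  carrier := TimedAutFixing S
  one_mem' := ⟨IsTimedAutPerm.one, fun _ _ => rfl⟩
  mul_mem' := fun hπ hσ => ⟨hπ.1.mul hσ.1, fun t ht => by
    rw [Equiv.Perm.mul_apply, hσ.2 t ht, hπ.2 t ht]⟩
  inv_mem' := fun {π} hπ => ⟨hπ.1.inv, fun t ht => by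
    rw [Equiv.Perm.inv_eq_iff_eq, hπ.2 t ht]⟩

local notation:max "Π_" S:max => timedAutFixingSubgroup S

theorem timedAutFixingSubgroup_anti {S T : Set ℝ} (hST : S ⊆ T) : (Π_ T) ≤ Π_ S :=
  fun _ hπ => ⟨hπ.1, fun t ht => hπ.2 t (hST ht)⟩

theorem TimedAutFixing.apply_eq_self {S : Set ℝ} {π : Equiv.Perm ℝ} (hπ : π ∈ TimedAutFixing S)
    {y : ℝ} (hy : (y : UnitAddCircle) ∈ ((↑) : ℝ → UnitAddCircle) '' S) : π y = y := by
  obtain ⟨t, ht, hty⟩ := hy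
  obtain ⟨n, hn⟩ := QuotientAddGroup.eq.1 hty
  have hy : y = t + n := by
    simp only [zsmul_eq_mul, mul_one] at hn
    linarith
  rw [hy, hπ.1.map_add_intCast, hπ.2 t ht]

theorem exists_isTimedAutPerm_eq_add_mul {g : ℝ → ℝ} (hg : LipschitzWith 1 g)
    (hper : Function.Periodic g 1) {c : ℝ} (hc : |c| < 1) :
    ∃ τ : Equiv.Perm ℝ, IsTimedAutPerm τ ∧ ∀ z, τ z = z + c * g z := by
  set f : ℝ → ℝ := fun z => z + c * g z with hf
  have hmono : StrictMono f := fun a b hab => by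
    have hlip : |g b - g a| ≤ b - a := by
      simpa [Real.dist_eq, abs_of_pos (sub_pos.2 hab)] using hg.dist_le_mul b a
    have : -(|c| * (b - a)) ≤ c * (g b - g a) :=
      calc -(|c| * (b - a)) ≤ -|c * (g b - g a)| := by
            rw [abs_mul]; exact neg_le_neg (mul_le_mul_of_nonneg_left hlip (abs_nonneg c))
        _ ≤ c * (g b - g a) := neg_abs_le _
    simp only [hf]
    nlinarith
  have hper_f : ∀ z, f (z + 1) = f z + 1 := fun z => by simp only [hf, hper z]; ring
  have hcont : Continuous f := continuous_id.add (continuous_const.mul hg.continuous)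
  have hsurj : Function.Surjective f := fun w => by
    set n : ℤ := ⌊w - f 0⌋
    have hw : w ∈ Icc (f (0 + n)) (f (0 + (n + 1 : ℤ))) := by
      rw [map_add_intCast_of_map_add_one hper_f, map_add_intCast_of_map_add_one hper_f]
      push_cast
      exact ⟨by linarith [Int.floor_le (w - f 0)], by linarith [Int.lt_floor_add_one (w - f 0)]⟩
    obtain ⟨z, -, hz⟩ := intermediate_value_Icc (by push_cast; linarith) hcont.continuousOn hw
    exact ⟨z, hz⟩
  exact ⟨Equiv.ofBijective f ⟨hmono.injective, hsurj⟩, ⟨hmono, hper_f⟩, fun _ => rfl⟩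

theorem lipschitzWith_one_coe_unitAddCircle : LipschitzWith 1 ((↑) : ℝ → UnitAddCircle) :=
  LipschitzWith.of_dist_le_mul fun a b => by
    rw [NNReal.coe_one, one_mul, dist_eq_norm, dist_eq_norm, ← QuotientAddGroup.mk_sub]
    exact QuotientAddGroup.norm_mk_le_norm

theorem orbit_timedAutFixingSubgroup_mem_nhds {S : Set ℝ} (hS : S.Finite) {y : ℝ}
    (hy : (y : UnitAddCircle) ∉ ((↑) : ℝ → UnitAddCircle) '' S) :
    orbit (Π_ S) y ∈ 𝓝 y := by
  obtain ⟨ε, hε, hball⟩ := Metric.mem_nhds_iff.1 ((hS.image _).isClosed.isOpen_compl.mem_nhds hy)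
  set bump : ℝ → ℝ := fun z => max (ε - dist (z : UnitAddCircle) y) 0
  have hbump_lip : LipschitzWith 1 bump := LipschitzWith.of_dist_le_mul fun a b => by
    rw [NNReal.coe_one, one_mul, Real.dist_eq]
    refine (abs_max_sub_max_le_abs _ _ _).trans ?_
    rw [sub_sub_sub_cancel_left, abs_sub_comm]
    exact (abs_dist_sub_le _ _ _).trans
      ((lipschitzWith_one_coe_unitAddCircle.dist_le_mul a b).trans_eq (one_mul _))
  have hbump_per : Function.Periodic bump 1 := fun z => by
    simp only [bump, QuotientAddGroup.mk_add, AddCircle.coe_period, add_zero]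
  refine Metric.mem_nhds_iff.2 ⟨ε, hε, fun w hw => ?_⟩
  have hc : |(w - y) / ε| < 1 := by
    rw [abs_div, abs_of_pos hε, div_lt_one hε]; exact hw
  obtain ⟨τ, hτ, hτ_apply⟩ := exists_isTimedAutPerm_eq_add_mul hbump_lip hbump_per hc
  refine ⟨⟨τ, hτ, fun t ht => ?_⟩, ?_⟩
  · have : ε ≤ dist (t : UnitAddCircle) y := not_lt.1 fun h => hball h ⟨t, ht, rfl⟩
    simp [hτ_apply, bump, this]
  · change τ y = w
    rw [hτ_apply]
    simp only [bump, dist_self, sub_zero, max_eq_left hε.le]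
    field_simp
    ring

theorem IsPreconnected.subset_orbit {G X : Type*} [Group G] [MulAction G X] [TopologicalSpace X]
    {s : Set X} {x : X} (hs : IsPreconnected s) (hx : x ∈ s)
    (h : ∀ y ∈ s, orbit G y ∈ 𝓝 y) : s ⊆ orbit G x := by
  have hcover : s ⊆ interior (orbit G x) ∪ interior (orbit G x)ᶜ := fun y hy => by
    rcases orbit.eq_or_disjoint (G := G) y x with hyx | hyx
    · exact Or.inl (mem_interior_iff_mem_nhds.2 (hyx ▸ h y hy))
    · exact Or.inr (interior_mono hyx.subset_compl_right (mem_interior_iff_mem_nhds.2 (h y hy)))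
  refine (hs.subset_left_of_subset_union isOpen_interior isOpen_interior ?_ hcover
    ⟨x, hx, mem_interior_iff_mem_nhds.2 (h x hx)⟩).trans interior_subset
  exact (disjoint_compl_right.mono interior_subset interior_subset)

theorem orbit_subset_orbit_of_le {G X : Type*} [Group G] [MulAction G X] {H K : Subgroup G}
    (hHK : H ≤ K) (x : X) : orbit H x ⊆ orbit K x :=
  fun _ ⟨h, hx⟩ => ⟨⟨h, hHK h.2⟩, hx⟩

theorem mem_orbit_timedAutFixingSubgroup_sup {A B : Set ℝ} (hA : A.Finite) (hB : B.Finite)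
    {q x : ℝ} (h : ∀ y ∈ uIcc q x, (y : UnitAddCircle) ∉ ((↑) : ℝ → UnitAddCircle) '' A ∨
      (y : UnitAddCircle) ∉ ((↑) : ℝ → UnitAddCircle) '' B) :
    q ∈ orbit ↥((Π_ A) ⊔ Π_ B) x := by
  refine isPreconnected_uIcc.subset_orbit right_mem_uIcc (fun y hy => ?_) left_mem_uIcc
  rcases h y hy with hyA | hyB
  · exact mem_of_superset (orbit_timedAutFixingSubgroup_mem_nhds hA hyA)
      (orbit_subset_orbit_of_le le_sup_left y)
  · exact mem_of_superset (orbit_timedAutFixingSubgroup_mem_nhds hB hyB)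
      (orbit_subset_orbit_of_le le_sup_right y)

theorem injOn_coe_unitAddCircle : InjOn ((↑) : ℝ → UnitAddCircle) (Ico 0 1) := fun _ hx _ hy h =>
  (AddCircle.coe_eq_coe_iff_of_mem_Ico (a := 0) (by rwa [zero_add]) (by rwa [zero_add])).1 h

theorem Monotone.eq_of_apply_eq_self_of_mem_uIcc {π : Equiv.Perm ℝ} (hπ : Monotone π) {x y : ℝ}
    (hy : π y = y) (hmem : y ∈ uIcc (π⁻¹ x) x) : y = x := by
  have hx : π (π⁻¹ x) = x := by simp
  rcases le_total (π⁻¹ x) x with h | h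
  · rw [uIcc_of_le h] at hmem
    have := hπ hmem.1
    rw [hx, hy] at this
    exact le_antisymm hmem.2 this
  · rw [uIcc_of_ge h] at hmem
    have := hπ hmem.2
    rw [hx, hy] at this
    exact le_antisymm this hmem.1

theorem timedAutFixingSubgroup_inter_le_sup_of_insert {F F' : Set ℝ} (hF : F.Finite)
    (hF' : F'.Finite) (hFsub : F ⊆ Ico 0 1) (hF'sub : F' ⊆ Ico 0 1) {x : ℝ} (hxF : x ∈ F)
    (hxF' : x ∉ F') (ih : (Π_ (F ∩ insert x F')) ≤ (Π_ F) ⊔ Π_ (insert x F')) :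
    (Π_ (F ∩ F')) ≤ (Π_ F) ⊔ Π_ F' := by
  set S := F ∩ F'
  set K := (Π_ F) ⊔ Π_ F'
  have hSsub : S ⊆ Ico 0 1 := inter_subset_left.trans hFsub
  have hA : (Π_ (insert x S)) ≤ K := by
    rw [← inter_insert_of_mem hxF]
    exact ih.trans (sup_le_sup_left (timedAutFixingSubgroup_anti (subset_insert x F')) _)
  have hAB : (Π_ (insert x S)) ⊔ Π_ F' ≤ Π_ S :=
    sup_le (timedAutFixingSubgroup_anti (subset_insert x S))
      (timedAutFixingSubgroup_anti inter_subset_right)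
  have hAF' : insert x S ∩ F' = S := by
    rw [insert_inter_of_notMem hxF', inter_assoc, inter_self]
  intro π hπ
  obtain ⟨g, hg⟩ := mem_orbit_iff.1 <| show π⁻¹ x ∈ orbit ↥((Π_ (insert x S)) ⊔ Π_ F') x by
    refine mem_orbit_timedAutFixingSubgroup_sup ((hF.inter_of_left F').insert x) hF' fun y hy => ?_
    by_contra! hyAB
    have hyS : (y : UnitAddCircle) ∈ ((↑) : ℝ → UnitAddCircle) '' S := by
      rw [← hAF', injOn_coe_unitAddCircle.image_inter (insert_subset (hFsub hxF) hSsub) hF'sub]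
      exact hyAB
    have hyx : y = x :=
      hπ.1.1.monotone.eq_of_apply_eq_self_of_mem_uIcc (TimedAutFixing.apply_eq_self hπ hyS) hy
    have hxS : x ∈ S := (injOn_coe_unitAddCircle.mem_image_iff hSsub (hFsub hxF)).1 (hyx ▸ hyS)
    exact hxF' hxS.2
  have hgS := hAB g.2
  have hπg : π * g ∈ Π_ (insert x S) := ⟨hπ.1.mul hgS.1, by
    rintro t (rfl | ht)
    · change π (g • t) = t
      rw [hg]
      simp
    · rw [Equiv.Perm.mul_apply, hgS.2 t ht, hπ.2 t ht]⟩
  have hgK : (g : Equiv.Perm ℝ) ∈ K := sup_le hA le_sup_right g.2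
  simpa using K.mul_mem (hA hπg) (K.inv_mem hgK)

theorem timedAutFixingSubgroup_inter_le_sup {F F' : Set ℝ} (hF : F.Finite) (hF' : F'.Finite)
    (hFsub : F ⊆ Ico 0 1) (hF'sub : F' ⊆ Ico 0 1) : (Π_ (F ∩ F')) ≤ (Π_ F) ⊔ Π_ F' := by
  induction hn : (F \ F').ncard generalizing F' with
  | zero =>
    rw [inter_eq_left.2 (sdiff_eq_empty.1 ((ncard_eq_zero hF.sdiff).1 hn))]
    exact le_sup_left
  | succ n ih =>
    obtain ⟨x, hxF, hxF'⟩ := nonempty_of_ncard_ne_zero (s := F \ F') (by omega)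
    refine timedAutFixingSubgroup_inter_le_sup_of_insert hF hF' hFsub hF'sub hxF hxF'
      (ih (hF'.insert x) (insert_subset (hFsub hxF) hF'sub) ?_)
    rw [← union_singleton, ← sdiff_sdiff,
      ncard_sdiff_singleton_of_mem (show x ∈ F \ F' from ⟨hxF, hxF'⟩), hn, Nat.add_sub_cancel]

/-- for finite `F, F' ⊆ [0,1)`, every `(F ∩ F')`-timed
automorphism `π` decomposes into a composition `πₙ ∘ ⋯ ∘ π₁` where each `πᵢ`
is either an `F`- or an `F'`-timed automorphism; i.e. `Π_{F ∩ F'}` is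
contained in the subgroup generated by `Π_F ∪ Π_{F'}`. -/
theorem timedAutFixing_inter_subset_closure
    (F F' : Set ℝ) (hF : F.Finite) (hF' : F'.Finite)
    (hFsub : F ⊆ Set.Ico (0 : ℝ) 1) (hF'sub : F' ⊆ Set.Ico (0 : ℝ) 1)
    (π : Equiv.Perm ℝ) (hπ : π ∈ TimedAutFixing (F ∩ F')) :
    ∃ l : List (Equiv.Perm ℝ),
      (∀ σ ∈ l, σ ∈ TimedAutFixing F ∪ TimedAutFixing F') ∧ π = l.prod := by
  have hmem : π ∈ (Π_ F) ⊔ Π_ F' := timedAutFixingSubgroup_inter_le_sup hF hF' hFsub hF'sub hπ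
  rw [Subgroup.sup_eq_closure, ← Subgroup.mem_toSubmonoid, Subgroup.closure_toSubmonoid,
    union_inv, inv_coe_set, inv_coe_set, union_self] at hmem
  obtain ⟨l, hl, hl_prod⟩ := Submonoid.exists_list_of_mem_closure hmem
  exact ⟨l, hl, hl_prod.symm⟩
end

section
/- Let F, F' ⊆ [0,1) be finite sets such that F ∖ F' = {t} and F' ∖ F = {t'}. Then for every (F ∩ F')-timed automorphism π there exist timed automorphisms π₁, …, πₙ, each of which is either an F-timed automorphism or an F'-timed automorphism, such that π(t) = (πₙ ∘ ⋯ ∘ π₁)(t). -/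
/-!
Since `π` fixes `(F ∩ F') + ℤ` pointwise and is increasing, no point of `(F ∩ F') + ℤ` lies
between `t` and `π t`; as `F, F' ⊆ [0, 1)`, every point `u` of that interval avoids `F + ℤ` or
`F' + ℤ`. For `T = F` or `F'` accordingly, and `c` small, `w ↦ w + c ∏_{s ∈ T} sin² (π (w - s))`
is a `T`-timed automorphism moving `u` to any prescribed nearby point. By compactness the
admissible step length is bounded below along the interval, so finitely many steps carry `t`
to `π t`.
-/

open Filter Function Set
open scoped NNReal

theorem Function.Periodic.deriv {f : ℝ → ℝ} {c : ℝ} (hf : Periodic f c) :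
    Periodic (deriv f) c := fun u => by
  rw [← deriv_comp_add_const, funext hf]

theorem Function.Periodic.exists_lipschitzWith {f : ℝ → ℝ} {c : ℝ} (hf : Periodic f c)
    (hc : c ≠ 0) (hf' : ContDiff ℝ 1 f) : ∃ K, LipschitzWith K f := by
  obtain ⟨C, hC⟩ := isBounded_iff_forall_norm_le.1
    (hf.deriv.isBounded_of_continuous hc (hf'.continuous_deriv le_rfl))
  exact ⟨C.toNNReal, lipschitzWith_of_nnnorm_deriv_le (hf'.differentiable one_ne_zero)
    fun u => NNReal.le_toNNReal_of_coe_le (hC _ (mem_range_self u))⟩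

theorem sin_pi_mul_sub_eq_zero_iff {u s : ℝ} :
    Real.sin (Real.pi * (u - s)) = 0 ↔ Int.fract u = Int.fract s := by
  rw [Real.sin_eq_zero_iff, Int.fract_eq_fract]
  refine exists_congr fun n => ⟨fun h => ?_, fun h => by rw [h, mul_comm]⟩
  exact (mul_left_cancel₀ Real.pi_ne_zero (by rw [← h, mul_comm])).symm

noncomputable def sinSqProd (T : Finset ℝ) (u : ℝ) : ℝ :=
  ∏ s ∈ T, Real.sin (Real.pi * (u - s)) ^ 2

section sinSqProd

variable (T : Finset ℝ)

theorem contDiff_sinSqProd : ContDiff ℝ 1 (sinSqProd T) :=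
  contDiff_prod fun _ _ =>
    (Real.contDiff_sin.comp ((contDiff_id.sub contDiff_const).const_smul Real.pi)).pow 2

theorem sinSqProd_periodic : Periodic (sinSqProd T) 1 := fun u =>
  Finset.prod_congr rfl fun s _ => by
    rw [show Real.pi * (u + 1 - s) = Real.pi * (u - s) + Real.pi by ring, Real.sin_add_pi,
      neg_sq]

theorem sinSqProd_eq_zero_of_mem {s : ℝ} (hs : s ∈ T) : sinSqProd T s = 0 :=
  Finset.prod_eq_zero hs (by simp)

theorem sinSqProd_pos {u : ℝ} (hu : ∀ s ∈ T, Int.fract u ≠ Int.fract s) : 0 < sinSqProd T u :=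
  Finset.prod_pos fun s hs => pow_two_pos_of_ne_zero (mt sin_pi_mul_sub_eq_zero_iff.1 (hu s hs))

end sinSqProd

section Perturbation

variable {ψ : ℝ → ℝ} {K : ℝ≥0}

theorem exists_isTimedAutPerm_eq_add_mul_s4 (hψ : LipschitzWith K ψ) (hp : Periodic ψ 1) {c : ℝ}
    (hc : |c| * K < 1) : ∃ σ : Equiv.Perm ℝ, IsTimedAutPerm σ ∧ ∀ w, σ w = w + c * ψ w := by
  set f : ℝ → ℝ := fun w => w + c * ψ w
  have hmono : StrictMono f := fun w w' hww' => by
    have hlip : |ψ w' - ψ w| ≤ K * (w' - w) := by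
      simpa [Real.dist_eq, abs_of_pos (sub_pos.2 hww')] using hψ.dist_le_mul w' w
    have : |c * (ψ w' - ψ w)| < w' - w := by
      rw [abs_mul]
      calc |c| * |ψ w' - ψ w| ≤ |c| * K * (w' - w) := by
            rw [mul_assoc]; exact mul_le_mul_of_nonneg_left hlip (abs_nonneg c)
        _ < w' - w := mul_lt_of_lt_one_left (sub_pos.2 hww') hc
    simp only [f]
    linarith [neg_abs_le (c * (ψ w' - ψ w))]
  obtain ⟨B, hB⟩ := isBounded_iff_forall_norm_le.1
    (hp.isBounded_of_continuous one_ne_zero hψ.continuous)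
  have hclose : ∀ w, |f w - w| ≤ |c| * B := fun w => by
    simpa [f, abs_mul] using mul_le_mul_of_nonneg_left (hB _ (mem_range_self w)) (abs_nonneg c)
  have hsurj : Surjective f := by
    have hcont : Continuous f := continuous_id.add (continuous_const.mul hψ.continuous)
    refine hcont.surjective ?_ ?_
    · exact tendsto_atTop_mono (fun w => by linarith [(abs_le.1 (hclose w)).1, id_eq w])
        (tendsto_atTop_add_const_right _ (-(|c| * B)) tendsto_id)
    · exact tendsto_atBot_mono (fun w => by linarith [(abs_le.1 (hclose w)).2, id_eq w])
        (tendsto_atBot_add_const_right _ (|c| * B) tendsto_id)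
  refine ⟨Equiv.ofBijective f ⟨hmono.injective, hsurj⟩, ⟨hmono, fun w => ?_⟩, fun _ => rfl⟩
  change f (w + 1) = f w + 1
  simp only [f, hp w]
  ring

theorem exists_mem_timedAutFixing_apply_eq (hψ : LipschitzWith K ψ) (hp : Periodic ψ 1)
    {S : Set ℝ} (hS : ∀ s ∈ S, ψ s = 0) {u v : ℝ} (huv : |v - u| * K < ψ u) :
    ∃ σ ∈ TimedAutFixing S, σ u = v := by
  have hu : 0 < ψ u := (mul_nonneg (abs_nonneg _) K.2).trans_lt huv
  obtain ⟨σ, hσ, hσf⟩ := exists_isTimedAutPerm_eq_add_mul_s4 hψ hp (c := (v - u) / ψ u)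
    (by rwa [abs_div, abs_of_pos hu, div_mul_eq_mul_div, div_lt_one hu])
  refine ⟨σ, ⟨hσ, fun s hs => by simp [hσf, hS s hs]⟩, ?_⟩
  rw [hσf, div_mul_cancel₀ _ hu.ne']
  ring

end Perturbation

theorem exists_list_prod_apply_eq_of_forall_near (A : Set (Equiv.Perm ℝ)) {x y δ : ℝ}
    (hδ : 0 < δ) (h : ∀ u ∈ uIcc x y, ∀ v, |v - u| < δ → ∃ σ ∈ A, σ u = v) :
    ∃ l : List (Equiv.Perm ℝ), (∀ σ ∈ l, σ ∈ A) ∧ l.prod x = y := by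
  suffices H : ∀ n : ℕ, ∀ z ∈ uIcc x y, |z - x| ≤ n * (δ / 2) →
      ∃ l : List (Equiv.Perm ℝ), (∀ σ ∈ l, σ ∈ A) ∧ l.prod x = z by
    obtain ⟨n, hn⟩ := exists_nat_ge (|y - x| / (δ / 2))
    exact H n y right_mem_uIcc ((div_le_iff₀ (half_pos hδ)).1 hn)
  intro n
  induction n with
  | zero =>
    intro z _ hz
    exact ⟨[], by simp, by simpa [sub_eq_zero, eq_comm] using hz⟩
  | succ n ih =>
    intro z hz hzx
    have hn : (0 : ℝ) < n + 1 := by positivity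
    set z' := x + (n / (n + 1) : ℝ) • (z - x)
    have hz' : z' ∈ uIcc x y := (convex_uIcc x y).add_smul_sub_mem left_mem_uIcc hz
      ⟨by positivity, (div_le_one hn).2 (by linarith)⟩
    have hz'x : |z' - x| = n * (|z - x| / (n + 1)) := by
      simp only [z', add_sub_cancel_left, smul_eq_mul, abs_mul, abs_div, Nat.abs_cast,
        abs_of_pos hn]
      ring
    have hzz' : |z - z'| = |z - x| / (n + 1) := by
      rw [show z - z' = (z - x) / (n + 1) by simp only [z', smul_eq_mul]; field_simp; ring,
        abs_div, abs_of_pos hn]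
    have hstep : |z - x| / (n + 1) ≤ δ / 2 := by
      rw [div_le_iff₀ hn]; push_cast at hzx; linarith
    obtain ⟨l, hl, hlx⟩ := ih z' hz' (by rw [hz'x]; gcongr)
    obtain ⟨σ, hσ, hσz⟩ := h z' hz' z (by rw [hzz']; linarith)
    refine ⟨σ :: l, ?_, by rw [List.prod_cons, Equiv.Perm.mul_apply, hlx, hσz]⟩
    simpa using ⟨hσ, hl⟩

theorem exists_list_prod_apply_eq_of_forall_fract_ne (T T' : Finset ℝ) {x y : ℝ}
    (h : ∀ u ∈ uIcc x y,
      (∀ s ∈ T, Int.fract u ≠ Int.fract s) ∨ (∀ s ∈ T', Int.fract u ≠ Int.fract s)) :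
    ∃ l : List (Equiv.Perm ℝ),
      (∀ σ ∈ l, σ ∈ TimedAutFixing T ∪ TimedAutFixing T') ∧ l.prod x = y := by
  obtain ⟨K, hK⟩ := (sinSqProd_periodic T).exists_lipschitzWith one_ne_zero (contDiff_sinSqProd T)
  obtain ⟨K', hK'⟩ :=
    (sinSqProd_periodic T').exists_lipschitzWith one_ne_zero (contDiff_sinSqProd T')
  set ψ := fun u => max (sinSqProd T u) (sinSqProd T' u)
  have hψ : ContinuousOn ψ (uIcc x y) := (hK.continuous.max hK'.continuous).continuousOn
  obtain ⟨z, hz, hzmin⟩ := isCompact_uIcc.exists_isMinOn nonempty_uIcc hψ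
  have hm : 0 < ψ z := (h z hz).elim
    (fun hT => lt_max_of_lt_left (sinSqProd_pos T hT))
    (fun hT' => lt_max_of_lt_right (sinSqProd_pos T' hT'))
  set L : ℝ≥0 := max K K' + 1
  have hL : (0 : ℝ) < L := by positivity
  refine exists_list_prod_apply_eq_of_forall_near _ (div_pos hm hL) fun u hu v huv => ?_
  have hstep : |v - u| * L < ψ u := ((lt_div_iff₀ hL).1 huv).trans_le (hzmin hu)
  rcases le_total (sinSqProd T' u) (sinSqProd T u) with hTT' | hT'T
  · obtain ⟨σ, hσ, hσu⟩ := exists_mem_timedAutFixing_apply_eq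
      (hK.weaken (le_max_left K K' |>.trans le_self_add)) (sinSqProd_periodic T)
      (fun s hs => sinSqProd_eq_zero_of_mem T hs) (by rwa [← max_eq_left hTT'])
    exact ⟨σ, Or.inl hσ, hσu⟩
  · obtain ⟨σ, hσ, hσu⟩ := exists_mem_timedAutFixing_apply_eq
      (hK'.weaken (le_max_right K K' |>.trans le_self_add)) (sinSqProd_periodic T')
      (fun s hs => sinSqProd_eq_zero_of_mem T' hs) (by rwa [← max_eq_right hT'T])
    exact ⟨σ, Or.inr hσ, hσu⟩

theorem IsTimedAutPerm.apply_add_intCast {π : Equiv.Perm ℝ} (hπ : IsTimedAutPerm π) (u : ℝ)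
    (k : ℤ) : π (u + k) = π u + k := by
  have hp : Periodic (fun w => π w - w) 1 := fun w => by simp only [hπ.2 w]; ring
  have := hp.int_mul k u
  simp only [mul_one] at this
  linarith

theorem apply_eq_self_of_fract_mem {S : Set ℝ} {π : Equiv.Perm ℝ} (hπ : π ∈ TimedAutFixing S)
    {u : ℝ} (hu : Int.fract u ∈ S) : π u = u := by
  rw [← Int.fract_add_floor u, hπ.1.apply_add_intCast, hπ.2 _ hu]

theorem StrictMono.notMem_uIcc_of_apply_eq_self {f : ℝ → ℝ} (hf : StrictMono f) {t u : ℝ}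
    (hu : f u = u) (hut : u ≠ t) : u ∉ uIcc t (f t) := by
  intro h
  rcases hut.lt_or_gt with hlt | hlt
  · have := hu ▸ hf hlt
    rcases Set.mem_uIcc.1 h with h | h <;> linarith [h.1, h.2]
  · have := hu ▸ hf hlt
    rcases Set.mem_uIcc.1 h with h | h <;> linarith [h.1, h.2]

theorem orbit_point_reachable_by_composition_general
    (F F' : Set ℝ) (hF : F.Finite) (hF' : F'.Finite)
    (hFsub : F ⊆ Set.Ico (0 : ℝ) 1) (hF'sub : F' ⊆ Set.Ico (0 : ℝ) 1)
    (t : ℝ) (hdiff : F \ F' = {t})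
    (π : Equiv.Perm ℝ) (hπ : π ∈ TimedAutFixing (F ∩ F')) :
    ∃ l : List (Equiv.Perm ℝ),
      (∀ σ ∈ l, σ ∈ TimedAutFixing F ∪ TimedAutFixing F') ∧ π t = l.prod t := by
  have ht : t ∈ F \ F' := hdiff ▸ rfl
  have hfract : ∀ s ∈ F ∪ F', Int.fract s = s := fun s hs =>
    Int.fract_eq_self.2 (hs.elim (hFsub ·) (hF'sub ·))
  have hgap : ∀ u ∈ uIcc t (π t), Int.fract u ∉ F ∩ F' := fun u hu hmem => by
    have hut : u ≠ t := by
      rintro rfl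
      exact ht.2 (hfract u (Or.inl ht.1) ▸ hmem.2)
    exact hπ.1.1.notMem_uIcc_of_apply_eq_self (apply_eq_self_of_fract_mem hπ hmem) hut hu
  have hsplit : ∀ u ∈ uIcc t (π t), (∀ s ∈ hF.toFinset, Int.fract u ≠ Int.fract s) ∨
      (∀ s ∈ hF'.toFinset, Int.fract u ≠ Int.fract s) := fun u hu => by
    simp only [Set.Finite.mem_toFinset]
    by_cases huF : Int.fract u ∈ F
    · refine Or.inr fun s hs hus => hgap u hu ⟨huF, ?_⟩
      rwa [hus, hfract s (Or.inr hs)]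
    · refine Or.inl fun s hs hus => huF ?_
      rwa [hus, hfract s (Or.inl hs)]
  obtain ⟨l, hl, hlt⟩ := exists_list_prod_apply_eq_of_forall_fract_ne _ _ hsplit
  rw [hF.coe_toFinset, hF'.coe_toFinset] at hl
  exact ⟨l, hl, hlt.symm⟩

/-- let `F, F' ⊆ [0,1)` be finite with `F \ F' = {t}` and
`F' \ F = {t'}`. Then for every `(F ∩ F')`-timed automorphism `π` there are
timed automorphisms `π₁, …, πₙ`, each an `F`- or an `F'`-timed automorphism,
with `π t = (πₙ ∘ ⋯ ∘ π₁) t`. -/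
theorem orbit_point_reachable_by_composition
    (F F' : Set ℝ) (hF : F.Finite) (hF' : F'.Finite)
    (hFsub : F ⊆ Set.Ico (0 : ℝ) 1) (hF'sub : F' ⊆ Set.Ico (0 : ℝ) 1)
    (t t' : ℝ) (hdiff : F \ F' = {t}) (hdiff' : F' \ F = {t'})
    (π : Equiv.Perm ℝ) (hπ : π ∈ TimedAutFixing (F ∩ F')) :
    ∃ l : List (Equiv.Perm ℝ),
      (∀ σ ∈ l, σ ∈ TimedAutFixing F ∪ TimedAutFixing F') ∧ π t = l.prod t :=
  orbit_point_reachable_by_composition_general F F' hF hF' hFsub hF'sub t hdiff π hπ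
end

section
/- Let A be a countably infinite set, ⊥ ∉ A, and k ∈ ℕ. A subset X ⊆ (A ∪ {⊥})^k is invariant under the componentwise action of Perm(A) (with π(⊥) = ⊥) if and only if X is a finite Boolean combination (built with union, intersection, and complement) of the basic sets {v : v_i = v_j} for 1 ≤ i, j ≤ k and {v : v_i = ⊥} for 1 ≤ i ≤ k. (This says that the subsets of (A ∪ {⊥})^k definable by equality constraints are exactly the invariant subsets.) -/
/-!
Atomic constraints are preserved by every injection `A → B` acting through `Option.map`, so
definable sets are invariant. Conversely, call the set of atomic constraints satisfied by a tuple
its equality type. Two tuples of the same equality type differ by a permutation of `A`: their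
entries are related by a bijection between finite subsets of `A`, which extends to all of `A`.
Hence an invariant set is the preimage of a set of equality types; as there are only finitely
many, it is a finite union of finite conjunctions of atoms and negated atoms.
-/

/-- Equality constraints over variables `x₁, …, x_k`: quantifier-free
formulas built from `true`, `false`, `x_i = x_j`, `x_i = ⊥` using Boolean
connectives. -/
inductive EqConstraint (k : ℕ) : Type
  | tru : EqConstraint k
  | fls : EqConstraint k
  | eqVar : Fin k → Fin k → EqConstraint k
  | eqBot : Fin k → EqConstraint k
  | not : EqConstraint k → EqConstraint k
  | and : EqConstraint k → EqConstraint k → EqConstraint k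
  | or : EqConstraint k → EqConstraint k → EqConstraint k

/-- The set of tuples in `(A ∪ {⊥})^k` defined by a constraint
(complement interprets negation, intersection conjunction, union
disjunction). -/
def EqConstraint.sem {A : Type*} {k : ℕ} :
    EqConstraint k → Set (Fin k → Option A)
  | .tru => Set.univ
  | .fls => ∅
  | .eqVar i j => {v | v i = v j}
  | .eqBot i => {v | v i = none}
  | .not φ => φ.semᶜ
  | .and φ ψ => φ.sem ∩ ψ.sem
  | .or φ ψ => φ.sem ∪ ψ.sem

open MeasureTheory

theorem Set.Finite.exists_perm_extend {α : Type*} {s : Set α} (hs : s.Finite) (f : s ↪ α) :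
    ∃ σ : Equiv.Perm α, ∀ x : s, σ x = f x := by
  have := hs.to_subtype
  cases finite_or_infinite α
  · exact Cardinal.extend_function_finite f ⟨Equiv.refl α⟩
  · exact Cardinal.extend_function_of_lt f
      ((Cardinal.lt_aleph0_of_finite s).trans_le (Cardinal.aleph0_le_mk α)) ⟨Equiv.refl α⟩

theorem exists_perm_comp_eq {ι α : Type*} [Finite ι] {v w : ι → α}
    (h : ∀ i j, v i = v j ↔ w i = w j) : ∃ σ : Equiv.Perm α, σ ∘ v = w := by
  have hsplit (i : ι) : v (Set.rangeSplitting v ⟨v i, i, rfl⟩) = v i :=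
    Set.apply_rangeSplitting v _
  let f : Set.range v ↪ α :=
    ⟨fun x => w (Set.rangeSplitting v x), fun x y hxy => Subtype.ext <| by
      simpa [Set.apply_rangeSplitting] using (h _ _).2 hxy⟩
  obtain ⟨σ, hσ⟩ := (Set.finite_range v).exists_perm_extend f
  exact ⟨σ, funext fun i => (hσ ⟨v i, i, rfl⟩).trans ((h _ _).1 (hsplit i))⟩

theorem exists_perm_optionMap_eq {ι α : Type*} [Finite ι] {v w : ι → Option α}
    (hnone : ∀ i, v i = none ↔ w i = none) (h : ∀ i j, v i = v j ↔ w i = w j) :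
    ∃ π : Equiv.Perm α, ∀ i, Option.map π (v i) = w i := by
  -- adjoining an index that points at `none` forces the permutation of `Option α` to fix it
  obtain ⟨σ, hσ⟩ := exists_perm_comp_eq (v := fun o : Option ι => o.bind v)
    (w := fun o => o.bind w) (by rintro (_ | i) (_ | j) <;> simp [h, hnone, eq_comm])
  have hσnone : σ none = none := congrFun hσ none
  refine ⟨Equiv.removeNone σ, fun i => ?_⟩
  have hσi : σ (v i) = w i := congrFun hσ (some i)
  cases hvi : v i with
  | none => rw [(hnone i).1 hvi, Option.map_none]
  | some a =>
    rw [hvi] at hσi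
    have hσa : σ (some a) ≠ none := fun hn => nomatch σ.injective (hn.trans hσnone.symm)
    obtain ⟨b, hb⟩ := Option.ne_none_iff_exists'.1 hσa
    rw [Option.map_some, Equiv.removeNone_some σ ⟨b, hb⟩, hσi]

namespace MeasureTheory.IsSetAlgebra

variable {α : Type*} {𝒜 : Set (Set α)}

theorem setOf_mem_iff_mem (h𝒜 : IsSetAlgebra 𝒜) {s : Set α} (hs : s ∈ 𝒜) (p : Prop) :
    {x | x ∈ s ↔ p} ∈ 𝒜 := by
  by_cases hp : p
  · simpa [hp] using hs
  · simpa [hp, Set.compl_def] using h𝒜.compl_mem hs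

theorem preimage_mem_of_finite {ι : Type*} [Finite ι] (h𝒜 : IsSetAlgebra 𝒜) {S : ι → Set α}
    (hS : ∀ i, S i ∈ 𝒜) (T : Set (ι → Prop)) : (fun x i => x ∈ S i) ⁻¹' T ∈ 𝒜 := by
  cases nonempty_fintype ι
  have hfiber (t : ι → Prop) :
      (fun x i => x ∈ S i) ⁻¹' {t} = ⋂ i ∈ Finset.univ, {x | x ∈ S i ↔ t i} := by
    ext x
    simp [funext_iff, eq_iff_iff]
  rw [← Set.biUnion_preimage_singleton, ← T.toFinite.coe_toFinset]
  exact h𝒜.biUnion_mem _ fun t _ => hfiber t ▸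
    h𝒜.biInter_mem _ fun i _ => h𝒜.setOf_mem_iff_mem (hS i) (t i)

end MeasureTheory.IsSetAlgebra

namespace EqConstraint

variable {A : Type*} {k : ℕ}

theorem isSetAlgebra_range_sem :
    IsSetAlgebra (Set.range (sem : EqConstraint k → Set (Fin k → Option A))) where
  empty_mem := ⟨.fls, rfl⟩
  compl_mem := by
    rintro _ ⟨φ, rfl⟩
    exact ⟨.not φ, rfl⟩
  union_mem := by
    rintro _ _ ⟨φ, rfl⟩ ⟨ψ, rfl⟩
    exact ⟨.or φ ψ, rfl⟩

theorem optionMap_mem_sem_iff {B : Type*} (φ : EqConstraint k) {f : A → B}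
    (hf : Function.Injective f) (v : Fin k → Option A) :
    (fun i => Option.map f (v i)) ∈ φ.sem ↔ v ∈ φ.sem := by
  induction φ with
  | tru | fls => rfl
  | eqVar i j => exact (Option.map_injective hf).eq_iff
  | eqBot i => exact Option.map_eq_none_iff
  | not φ ih => exact not_congr ih
  | and φ ψ ihφ ihψ => exact and_congr ihφ ihψ
  | or φ ψ ihφ ihψ => exact or_congr ihφ ihψ

theorem image_optionMap_sem (φ : EqConstraint k) (π : Equiv.Perm A) :
    (fun v : Fin k → Option A => fun i => Option.map π (v i)) '' φ.sem = φ.sem := by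
  ext w
  constructor
  · rintro ⟨v, hv, rfl⟩
    exact (φ.optionMap_mem_sem_iff π.injective v).2 hv
  · intro hw
    refine ⟨fun i => Option.map π.symm (w i),
      (φ.optionMap_mem_sem_iff π.symm.injective w).2 hw, ?_⟩
    funext i
    simp [Option.map_map]

def atom : Fin k ⊕ Fin k × Fin k → EqConstraint k
  | .inl i => .eqBot i
  | .inr (i, j) => .eqVar i j

def eqType (v : Fin k → Option A) : Fin k ⊕ Fin k × Fin k → Prop :=
  fun b => v ∈ (atom b).sem

theorem exists_perm_of_eqType_eq {v w : Fin k → Option A}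
    (h : eqType v = eqType w) : ∃ π : Equiv.Perm A, (fun i => Option.map π (v i)) = w := by
  obtain ⟨π, hπ⟩ := exists_perm_optionMap_eq (fun i => Iff.of_eq (congrFun h (.inl i)))
    (fun i j => Iff.of_eq (congrFun h (.inr (i, j))))
  exact ⟨π, funext hπ⟩

theorem preimage_image_eqType_of_invariant {X : Set (Fin k → Option A)}
    (hX : ∀ π : Equiv.Perm A, (fun v : Fin k → Option A => fun i => Option.map π (v i)) '' X = X) :
    eqType ⁻¹' (eqType '' X) = X := by
  refine subset_antisymm ?_ (Set.subset_preimage_image _ _)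
  rintro w ⟨v, hv, hvw⟩
  obtain ⟨π, rfl⟩ := exists_perm_of_eqType_eq hvw
  rw [← hX π]
  exact ⟨v, hv, rfl⟩

end EqConstraint

open EqConstraint in
theorem invariant_iff_definable_general
    {A : Type*} (k : ℕ)
    (X : Set (Fin k → Option A)) :
    (∀ π : Equiv.Perm A, (fun v : Fin k → Option A =>
        fun i => Option.map π (v i)) '' X = X) ↔
      ∃ φ : EqConstraint k, X = EqConstraint.sem φ := by
  constructor
  · intro hX
    obtain ⟨φ, hφ⟩ := isSetAlgebra_range_sem.preimage_mem_of_finite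
      (fun b => ⟨atom b, rfl⟩) (eqType '' X)
    exact ⟨φ, (preimage_image_eqType_of_invariant hX).symm.trans hφ.symm⟩
  · rintro ⟨φ, rfl⟩ π
    exact φ.image_optionMap_sem π

/-- a subset `X ⊆ (A ∪ {⊥})^k` is invariant under the
componentwise action of `Perm A` (with `π ⊥ = ⊥`) iff it is a finite Boolean
combination of the basic sets `{v : v_i = v_j}` and `{v : v_i = ⊥}`, i.e.
iff it is definable by an equality constraint. -/
theorem invariant_iff_definable
    {A : Type*} [Countable A] [Infinite A] (k : ℕ)
    (X : Set (Fin k → Option A)) :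
    (∀ π : Equiv.Perm A, (fun v : Fin k → Option A =>
        fun i => Option.map π (v i)) '' X = X) ↔
      ∃ φ : EqConstraint k, X = EqConstraint.sem φ :=
  invariant_iff_definable_general k X
end

section
/- Let A be a countably infinite set, Σ a finite alphabet, and S, S' ⊆ A finite subsets. If a data language L ⊆ (Σ × A)* is both S-invariant and S'-invariant, then L is (S ∩ S')-invariant. (Finite supports of data languages over equality atoms are closed under intersection.) -/
/-- Action of a bijection `π : A ≃ A` on a data word over `Γ × A`:
apply `π` to every data value. -/
def actDataWord {A Γ : Type*} (π : Equiv.Perm A) (w : List (Γ × A)) :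
    List (Γ × A) :=
  w.map (fun p => (p.1, π p.2))

/-- A data language `L` is `S`-invariant if `π(L) = L` for every bijection
`π` of `A` fixing `S` pointwise. -/
def DataInvariant {A Γ : Type*} (S : Set A) (L : Set (List (Γ × A))) : Prop :=
  ∀ π : Equiv.Perm A, (∀ a ∈ S, π a = a) → actDataWord π '' L = L

/-! The invariance group of `L` contains the pointwise stabilisers of `S` and of `S'`, so it
suffices that these two generate the pointwise stabiliser of `S ∩ S'`. Every transposition of
atoms outside `S ∩ S'` lies in the join: if `x ∉ S'` and `y ∉ S`, pick a fresh atom `c ∉ S ∪ S'`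
and conjugate `(x c)` by `(c y)`. Composing such transpositions, any `π` fixing `S ∩ S'` is
matched on the finite set `S ∪ S'` by some `τ` in the join; then `τ⁻¹ π` fixes `S`, and
`π = τ (τ⁻¹ π)` lies in the join. -/

open Equiv Equiv.Perm

section Stabilizer

variable {A Γ : Type*}

@[simp]
lemma actDataWord_one (w : List (Γ × A)) : actDataWord 1 w = w := by
  simp [actDataWord]

lemma actDataWord_mul (π σ : Perm A) (w : List (Γ × A)) :
    actDataWord (π * σ) w = actDataWord π (actDataWord σ w) := by
  simp [actDataWord]

lemma image_actDataWord_mul (π σ : Perm A) (L : Set (List (Γ × A))) :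
    actDataWord (π * σ) '' L = actDataWord π '' (actDataWord σ '' L) := by
  rw [Set.image_image]
  exact Set.image_congr fun w _ => actDataWord_mul π σ w

def dataStabilizer (L : Set (List (Γ × A))) : Subgroup (Perm A) where
  carrier := {π | actDataWord π '' L = L}
  one_mem' := by simp
  mul_mem' {π σ} hπ hσ := by
    change actDataWord (π * σ) '' L = L
    rw [image_actDataWord_mul, hσ, hπ]
  inv_mem' {π} hπ := by
    change actDataWord π⁻¹ '' L = L
    conv_lhs => rw [← hπ, ← image_actDataWord_mul, inv_mul_cancel]
    simp

lemma dataInvariant_iff_fixingSubgroup_le (S : Set A) (L : Set (List (Γ × A))) :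
    DataInvariant S L ↔ fixingSubgroup (Perm A) S ≤ dataStabilizer L := by
  simp only [DataInvariant, SetLike.le_def, mem_fixingSubgroup_iff, Perm.smul_def]
  rfl

end Stabilizer

section FixingSubgroup

variable {A : Type*} [DecidableEq A]

lemma swap_mem_fixingSubgroup {T : Set A} {x y : A} (hx : x ∉ T) (hy : y ∉ T) :
    swap x y ∈ fixingSubgroup (Perm A) T :=
  (mem_fixingSubgroup_iff _).mpr fun _ hs =>
    swap_apply_of_ne_of_ne (ne_of_mem_of_not_mem hs hx) (ne_of_mem_of_not_mem hs hy)

lemma exists_mem_eqOn_of_swap_mem {T : Set A} {H : Subgroup (Perm A)}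
    (hH : H ≤ fixingSubgroup (Perm A) T) (hswap : ∀ x ∉ T, ∀ y ∉ T, swap x y ∈ H)
    {π : Perm A} (hπ : π ∈ fixingSubgroup (Perm A) T) (F : Finset A) :
    ∃ τ ∈ H, Set.EqOn τ π F := by
  induction F using Finset.induction_on with
  | empty => exact ⟨1, H.one_mem, by simp⟩
  | @insert a F haF ih =>
    obtain ⟨τ, hτH, hτπ⟩ := ih
    by_cases hτa : τ a = π a
    · exact ⟨τ, hτH, by simpa [Set.EqOn, hτa] using hτπ⟩
    have hτ := (mem_fixingSubgroup_iff _).mp (hH hτH)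
    have hπ := (mem_fixingSubgroup_iff _).mp hπ
    have ha : a ∉ T := fun h => hτa ((hτ a h).trans (hπ a h).symm)
    have hτa_T : τ a ∉ T := fun h => ha (τ.injective (hτ _ h) ▸ h)
    have hπa_T : π a ∉ T := fun h => ha (π.injective (hπ _ h) ▸ h)
    refine ⟨swap (τ a) (π a) * τ, H.mul_mem (hswap _ hτa_T _ hπa_T) hτH, ?_⟩
    intro b hb
    rcases Finset.mem_insert.mp hb with rfl | hb
    · simp
    · have hba : b ≠ a := ne_of_mem_of_not_mem hb haF
      have hτb : τ b = π b := hτπ hb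
      rw [Perm.mul_apply, hτb, swap_apply_of_ne_of_ne]
      · exact hτb ▸ τ.injective.ne hba
      · exact π.injective.ne hba

variable [Infinite A] {S S' : Set A}

lemma swap_mem_fixingSubgroup_sup_of_notMem (hS : S.Finite) (hS' : S'.Finite) {x y : A}
    (hx : x ∉ S') (hy : y ∉ S) :
    swap x y ∈ fixingSubgroup (Perm A) S ⊔ fixingSubgroup (Perm A) S' := by
  obtain rfl | hxy := eq_or_ne x y
  · rw [swap_self]
    exact Subgroup.one_mem _
  obtain ⟨c, hc⟩ := ((hS.union hS').insert x |>.insert y).exists_notMem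
  simp only [Set.mem_insert_iff, Set.mem_union, not_or] at hc
  obtain ⟨hcy, hcx, hcS, hcS'⟩ := hc
  -- conjugating `swap x c` by `swap c y` moves `c` to `y`
  rw [swap_comm, ← swap_mul_swap_mul_swap (Ne.symm hcx) hxy]
  have hcy_mem := Subgroup.mem_sup_left (T := fixingSubgroup (Perm A) S')
    (swap_mem_fixingSubgroup hcS hy)
  exact Subgroup.mul_mem _ (Subgroup.mul_mem _ hcy_mem
    (Subgroup.mem_sup_right (swap_mem_fixingSubgroup hx hcS'))) hcy_mem

lemma swap_mem_fixingSubgroup_sup (hS : S.Finite) (hS' : S'.Finite) {x y : A}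
    (hx : x ∉ S ∩ S') (hy : y ∉ S ∩ S') :
    swap x y ∈ fixingSubgroup (Perm A) S ⊔ fixingSubgroup (Perm A) S' := by
  rcases not_and_or.mp hx with hxS | hxS' <;> rcases not_and_or.mp hy with hyS | hyS'
  · exact Subgroup.mem_sup_left (swap_mem_fixingSubgroup hxS hyS)
  · exact swap_comm x y ▸ swap_mem_fixingSubgroup_sup_of_notMem hS hS' hyS' hxS
  · exact swap_mem_fixingSubgroup_sup_of_notMem hS hS' hxS' hyS
  · exact Subgroup.mem_sup_right (swap_mem_fixingSubgroup hxS' hyS')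

theorem fixingSubgroup_inter_le_sup (hS : S.Finite) (hS' : S'.Finite) :
    fixingSubgroup (Perm A) (S ∩ S') ≤
      fixingSubgroup (Perm A) S ⊔ fixingSubgroup (Perm A) S' := by
  intro π hπ
  obtain ⟨τ, hτH, hτπ⟩ := exists_mem_eqOn_of_swap_mem
    (sup_le (fixingSubgroup_antitone _ _ Set.inter_subset_left)
      (fixingSubgroup_antitone _ _ Set.inter_subset_right))
    (fun x hx y hy => swap_mem_fixingSubgroup_sup hS hS' hx hy) hπ (hS.union hS').toFinset
  have hfix : τ⁻¹ * π ∈ fixingSubgroup (Perm A) S := by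
    refine (mem_fixingSubgroup_iff _).mpr fun s hs => ?_
    rw [Perm.smul_def, Perm.mul_apply, Perm.inv_eq_iff_eq]
    exact (hτπ (by simp [hs])).symm
  simpa using Subgroup.mul_mem _ hτH (Subgroup.mem_sup_left hfix)

end FixingSubgroup

theorem dataInvariant_inter_general
    {A Γ : Type*} [Infinite A]
    (L : Set (List (Γ × A))) (S S' : Set A)
    (hS : S.Finite) (hS' : S'.Finite)
    (hSinv : DataInvariant S L) (hS'inv : DataInvariant S' L) :
    DataInvariant (S ∩ S') L := by
  classical
  rw [dataInvariant_iff_fixingSubgroup_le] at hSinv hS'inv ⊢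
  exact (fixingSubgroup_inter_le_sup hS hS').trans (sup_le hSinv hS'inv)

/-- over a countably infinite set `A` of equality atoms,
if a data language `L` is both `S`-invariant and `S'`-invariant for finite
`S, S' ⊆ A`, then `L` is `(S ∩ S')`-invariant. -/
theorem dataInvariant_inter
    {A Γ : Type*} [Countable A] [Infinite A] [Fintype Γ]
    (L : Set (List (Γ × A))) (S S' : Set A)
    (hS : S.Finite) (hS' : S'.Finite)
    (hSinv : DataInvariant S L) (hS'inv : DataInvariant S' L) :
    DataInvariant (S ∩ S') L :=
  dataInvariant_inter_general L S S' hS hS' hSinv hS'inv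
end
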